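/- arXiv:1606.06939 — 6 statements merged into one kernel-verified Lean document; each statement's English description precedes it below -/
import Mathlib

section
/- Let $e\ge2$, $p$ a prime, $s\ge0$, and let $a_0,\dots,a_s$ be integers with $0\le a_i<p$ for all $i$, and let $l$ be an integer with $0\le l<e$. If $\delta_0,\dots,\delta_{s+1},\delta'_0,\dots,\delta'_{s+1}\in\{0,1\}$ satisfy $(\sum_{i=0}^s(-1)^{\delta_{i+1}}a_ip^i)e+(-1)^{\delta_0}l=(\sum_{i=0}^s(-1)^{\delta'_{i+1}}a_ip^i)e+(-1)^{\delta'_0}l$, then $\delta_{i+1}=\delta'_{i+1}$ whenever $0\le i\le s$ and $a_i\ne0$, and $\delta_0=\delta'_0$ if $l\ne0$. -/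
-- digit uniqueness lemma
lemma digitsLemma (p : ℤ) (hp : 2 ≤ p) :
    ∀ (n : ℕ) (f : ℕ → ℤ), (∀ i ≤ n, |f i| < p) →
      (∑ i ∈ Finset.range (n+1), f i * p ^ i) = 0 → ∀ i ≤ n, f i = 0 := by
  intro n
  induction n with
  | zero =>
    intro f hb hs i hi
    interval_cases i
    simpa using hs
  | succ n ih =>
    intro f hb hs i hi
    rw [Finset.sum_range_succ'] at hs
    have hrw : ∑ i ∈ Finset.range (n+1), f (i+1) * p ^ (i+1)
        = p * ∑ i ∈ Finset.range (n+1), f (i+1) * p ^ i := by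
      rw [Finset.mul_sum]
      exact Finset.sum_congr rfl fun i _ => by ring
    rw [hrw] at hs
    set T := ∑ i ∈ Finset.range (n+1), f (i+1) * p ^ i with hT
    have h0 : f 0 = p * (-T) := by linarith
    have hf0 : f 0 = 0 := by
      have hd : p ∣ f 0 := ⟨-T, h0⟩
      exact Int.eq_zero_of_abs_lt_dvd hd (hb 0 (by omega))
    have hT0 : T = 0 := by
      have : p * (-T) = 0 := by rw [← h0, hf0]
      have hp0 : p ≠ 0 := by omega
      have := mul_eq_zero.mp this
      omega
    have hrest := ih (fun i => f (i+1)) (fun i hi => hb (i+1) (by omega)) hT0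
    rcases Nat.eq_zero_or_pos i with h | h
    · subst h; exact hf0
    · obtain ⟨j, rfl⟩ := Nat.exists_eq_succ_of_ne_zero (by omega : i ≠ 0)
      exact hrest j (by omega)

lemma digitsLemma2 (p : ℤ) (hp : 2 ≤ p) (n : ℕ) (f : ℕ → ℤ)
    (hb : ∀ i ≤ n, |f i| < 2 * p ∧ Even (f i))
    (hs : ∑ i ∈ Finset.range (n+1), f i * p ^ i = 0) : ∀ i ≤ n, f i = 0 := by
  have h2 : ∀ i ≤ n, f i = 2 * (f i / 2) := by
    intro i hi
    obtain ⟨t, ht⟩ := (hb i hi).2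
    omega
  have hsum : 2 * ∑ i ∈ Finset.range (n+1), (f i / 2) * p ^ i = 0 := by
    rw [Finset.mul_sum, ← hs]
    refine Finset.sum_congr rfl fun i hi => ?_
    have h := h2 i (by simpa [Nat.lt_succ_iff] using hi)
    linear_combination (-(p ^ i)) * h
  have hsum' : ∑ i ∈ Finset.range (n+1), (f i / 2) * p ^ i = 0 := by linarith
  intro i hi
  have := digitsLemma p hp n (fun i => f i / 2)
    (fun j hj => by
      have h1 := (hb j hj).1
      have h2' := h2 j hj
      show |f j / 2| < p
      rw [abs_lt] at h1 ⊢
      omega) hsum' i hi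
  have h : f i / 2 = 0 := this
  have := h2 i hi
  omega

lemma signInj {a b : ℕ} (ha : a ≤ 1) (hb : b ≤ 1) (h : (-1:ℤ)^a = (-1)^b) : a = b := by
  interval_cases a <;> interval_cases b <;> simp_all

lemma signAbs (n : ℕ) : |(-1:ℤ)^n| = 1 := by
  rw [abs_pow]; simp

lemma signOdd (n : ℕ) : Odd ((-1:ℤ)^n) := (by decide : Odd (-1:ℤ)).pow

theorem stmt0 (e : ℤ) (p : ℕ) (he : 2 ≤ e) (hp : p.Prime) (s : ℕ)
    (a : ℕ → ℤ) (ha : ∀ i ≤ s, 0 ≤ a i ∧ a i < p)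
    (l : ℤ) (hl0 : 0 ≤ l) (hle : l < e)
    (δ δ' : ℕ → ℕ) (hδ : ∀ i ≤ s + 1, δ i ≤ 1) (hδ' : ∀ i ≤ s + 1, δ' i ≤ 1)
    (heq : (∑ i ∈ Finset.range (s + 1), (-1 : ℤ) ^ δ (i + 1) * a i * (p : ℤ) ^ i) * e
              + (-1 : ℤ) ^ δ 0 * l
         = (∑ i ∈ Finset.range (s + 1), (-1 : ℤ) ^ δ' (i + 1) * a i * (p : ℤ) ^ i) * e
              + (-1 : ℤ) ^ δ' 0 * l) :
    (∀ i ≤ s, a i ≠ 0 → δ (i + 1) = δ' (i + 1)) ∧ (l ≠ 0 → δ 0 = δ' 0) := by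
  set d : ℕ → ℤ := fun i => (-1:ℤ)^δ i - (-1)^δ' i with hd
  have hdabs : ∀ i, |d i| ≤ 2 := by
    intro i
    calc |d i| ≤ |(-1:ℤ)^δ i| + |(-1:ℤ)^δ' i| := abs_sub _ _
    _ = 2 := by rw [signAbs, signAbs]; norm_num
  have hdeven : ∀ i, Even (d i) := fun i => (signOdd (δ i)).sub_odd (signOdd (δ' i))
  set S := ∑ i ∈ Finset.range (s+1), d (i+1) * a i * (p:ℤ)^i with hSdef
  have hS : S * e + d 0 * l = 0 := by
    have hsplit : S = (∑ i ∈ Finset.range (s + 1), (-1 : ℤ) ^ δ (i + 1) * a i * (p : ℤ) ^ i)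
        - ∑ i ∈ Finset.range (s + 1), (-1 : ℤ) ^ δ' (i + 1) * a i * (p : ℤ) ^ i := by
      rw [← Finset.sum_sub_distrib]
      exact Finset.sum_congr rfl fun i _ => by simp [hd]; ring
    rw [hsplit, hd]
    ring_nf
    ring_nf at heq
    linarith
  have hSeven : Even S := by
    apply Finset.even_sum
    intro i _
    exact ((hdeven (i+1)).mul_right _).mul_right _
  have hSabs : |S| ≤ 1 := by
    have h1 : |S * e| = |d 0 * l| := by rw [show S * e = -(d 0 * l) by linarith]; rw [abs_neg]
    rw [abs_mul, abs_mul] at h1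
    have h2 : |d 0| * |l| ≤ 2 * l := by
      have := hdabs 0
      have : |l| = l := abs_of_nonneg hl0
      nlinarith [hdabs 0, abs_nonneg (d 0), abs_nonneg l]
    have h3 : |e| = e := abs_of_nonneg (by linarith)
    rw [h3] at h1
    nlinarith [abs_nonneg S]
  have hS0 : S = 0 := by
    obtain ⟨t, ht⟩ := hSeven
    rcases abs_le.mp hSabs with ⟨h1, h2⟩
    omega
  have hdl : d 0 * l = 0 := by rw [hS0] at hS; linarith [hS]
  constructor
  · intro i hi hai
    have hp2 : (2:ℤ) ≤ (p:ℤ) := by exact_mod_cast hp.two_le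
    have key := digitsLemma2 (p:ℤ) hp2 s (fun i => d (i+1) * a i)
      (fun j hj => by
        constructor
        · have h1 := hdabs (j+1)
          have h2 := ha j hj
          rw [abs_mul]
          have h3 : |a j| = a j := abs_of_nonneg h2.1
          nlinarith [abs_nonneg (d (j+1))]
        · exact (hdeven (j+1)).mul_right _)
      (by rw [← hSdef]; exact hS0) i hi
    have hdi : d (i+1) = 0 := by
      rcases mul_eq_zero.mp key with h | h
      · exact h
      · exact absurd h hai
    have : (-1:ℤ)^δ (i+1) = (-1)^δ' (i+1) := by simp [hd] at hdi; linarith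
    exact signInj (hδ (i+1) (by omega)) (hδ' (i+1) (by omega)) this
  · intro hl
    have hd0 : d 0 = 0 := by
      rcases mul_eq_zero.mp hdl with h | h
      · exact h
      · exact absurd h hl
    have : (-1:ℤ)^δ 0 = (-1)^δ' 0 := by simp [hd] at hd0; linarith
    exact signInj (hδ 0 (by omega)) (hδ' 0 (by omega)) this
end

section
/- Fix $e\ge2$ and consider paths of type $A_1$: elements $\pi$ of $\mathsf P^+_n$, i.e. maps $\pi:[0,n]\to\mathbb Z_{\ge0}$ with $\pi(0)=0$ and $\pi(a+1)=\pi(a)\pm1$. For a single step from $u$ to $v=u\pm1$ (both in $\mathbb Z_{\ge0}$), define $\deg_e(u,v)=1$ if $u=me-1$ for some $m\in\mathbb Z_{>0}$ and $v<me-1$; $\deg_e(u,v)=-1$ if $v=me-1$ for some $m\in\mathbb Z_{>0}$ and $u>me-1$; and $0$ otherwise. Define $\deg_e(\pi)=\sum_{a=0}^{n-1}\deg_e(\pi(a),\pi(a+1))$. Let $H=\{me-1:m\in\mathbb Z_{>0}\}$. If $\pi(u),\pi(v)\in H$ for the endpoints of a path $\pi$ on $[u,v]$ staying in $\mathbb Z_{\ge0}$,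 then $\deg_e(\pi)=|\mathsf A^-(\pi)|-|\mathsf A^+(\pi)|$, where $\mathsf A^+(\pi)$ (resp. $\mathsf A^-(\pi)$) is the set of segments $\pi[r,s]$ with $\pi(r)=\pi(s)=me-1\in H$ and $me-1<\pi(c)<(m+1)e-1$ (resp. $(m-1)e-1<\pi(c)<me-1$) for all $r<c<s$. -/
open scoped Classical
noncomputable section

def isWall (e x : ℤ) : Prop := 0 < x + 1 ∧ (x + 1) % e = 0

def degStep (e u v : ℤ) : ℤ :=
  if isWall e u ∧ v < u then 1
  else if isWall e v ∧ v < u then -1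
  else 0

def pathDeg (e : ℤ) (π : ℕ → ℤ) (r s : ℕ) : ℤ :=
  ∑ a ∈ Finset.Ico r s, degStep e (π a) (π (a + 1))

/-- A nonnegative `±1`-path on the interval `[u,v]`. -/
def IsPathOn (π : ℕ → ℤ) (u v : ℕ) : Prop :=
  (∀ a, u ≤ a → a ≤ v → 0 ≤ π a) ∧
  (∀ a, u ≤ a → a < v → π (a + 1) = π a + 1 ∨ π (a + 1) = π a - 1)

/-- `π[r,s]` is a positive arc (within `[u,v]`). -/
def IsPosArc (e : ℤ) (π : ℕ → ℤ) (u v r s : ℕ) : Prop :=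
  u ≤ r ∧ r < s ∧ s ≤ v ∧ isWall e (π r) ∧ π s = π r ∧
    ∀ c, r < c → c < s → π r < π c ∧ π c < π r + e

/-- `π[r,s]` is a negative arc (within `[u,v]`). -/
def IsNegArc (e : ℤ) (π : ℕ → ℤ) (u v r s : ℕ) : Prop :=
  u ≤ r ∧ r < s ∧ s ≤ v ∧ isWall e (π r) ∧ π s = π r ∧
    ∀ c, r < c → c < s → π r - e < π c ∧ π c < π r

def posArcs (e : ℤ) (π : ℕ → ℤ) (u v : ℕ) : Set (ℕ × ℕ) :=
  {p | IsPosArc e π u v p.1 p.2}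

def negArcs (e : ℤ) (π : ℕ → ℤ) (u v : ℕ) : Set (ℕ × ℕ) :=
  {p | IsNegArc e π u v p.1 p.2}

/-! ### Auxiliary lemmas -/

lemma wall_dvd {e w : ℤ} (hw : isWall e w) : e ∣ w + 1 :=
  Int.dvd_of_emod_eq_zero hw.2

lemma wall_spacing {e w1 w2 : ℤ} (hw1 : isWall e w1) (hw2 : isWall e w2) (h : w1 < w2) :
    w1 + e ≤ w2 := by
  have hd : e ∣ (w2 + 1) - (w1 + 1) := dvd_sub (wall_dvd hw2) (wall_dvd hw1)
  have : e ≤ (w2 + 1) - (w1 + 1) := Int.le_of_dvd (by linarith) hd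
  linarith

lemma wall_add {e w : ℤ} (he : 0 < e) (hw : isWall e w) : isWall e (w + e) := by
  refine ⟨by linarith [hw.1], ?_⟩
  rw [show w + e + 1 = (w + 1) + e by ring, Int.add_emod, hw.2, Int.emod_self]
  simp

lemma wall_sub {e w : ℤ} (hw : isWall e w) (h0 : 0 ≤ w - e) : isWall e (w - e) := by
  refine ⟨by linarith, ?_⟩
  rw [show w - e + 1 = (w + 1) - e by ring, Int.sub_emod, hw.2, Int.emod_self]
  simp

lemma no_wall_above {e w x : ℤ} (hw : isWall e w) (h1 : w < x) (h2 : x < w + e) :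
    ¬ isWall e x := fun hx => by linarith [wall_spacing hw hx h1]

lemma no_wall_below {e w x : ℤ} (hw : isWall e w) (h1 : w - e < x) (h2 : x < w) :
    ¬ isWall e x := fun hx => by linarith [wall_spacing hx hw h2]

lemma posArcs_finite (e : ℤ) (π : ℕ → ℤ) (u v : ℕ) : (posArcs e π u v).Finite :=
  Set.Finite.subset ((Set.finite_Iic v).prod (Set.finite_Iic v))
    (fun p hp => ⟨hp.2.1.le.trans hp.2.2.1, hp.2.2.1⟩)

lemma negArcs_finite (e : ℤ) (π : ℕ → ℤ) (u v : ℕ) : (negArcs e π u v).Finite :=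
  Set.Finite.subset ((Set.finite_Iic v).prod (Set.finite_Iic v))
    (fun p hp => ⟨hp.2.1.le.trans hp.2.2.1, hp.2.2.1⟩)

/-- Confinement for an upward excursion between consecutive wall times. -/
lemma confine_up {e : ℤ} (he : 2 ≤ e) {π : ℕ → ℤ} {u v t : ℕ}
    (hpath : IsPathOn π u v) (hu : isWall e (π u)) (htv : t ≤ v)
    (hint : ∀ c, u < c → c < t → ¬ isWall e (π c))
    (hs1 : π (u + 1) = π u + 1) :
    ∀ c, u < c → c < t → π u < π c ∧ π c < π u + e := by
  intro c
  induction c with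
  | zero => intro h1 _; exact absurd h1 (Nat.not_lt_zero _)
  | succ c ih =>
    intro h1 h2
    rcases Nat.lt_or_ge u c with h | h
    · have hb := ih h (by omega)
      have hstep := hpath.2 c (by omega) (by omega)
      have hnw : ¬ isWall e (π (c + 1)) := hint _ (by omega) h2
      constructor
      · rcases hstep with h' | h'
        · linarith [hb.1]
        · by_contra hle
          push_neg at hle
          have hpe : π (c + 1) = π u := le_antisymm hle (by linarith [hb.1])
          exact hnw (by rw [hpe]; exact hu)
      · rcases hstep with h' | h'
        · by_contra hle
          push_neg at hle
          have hpe : π (c + 1) = π u + e := le_antisymm (by linarith [hb.2]) hle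
          exact hnw (by rw [hpe]; exact wall_add (by linarith) hu)
        · linarith [hb.2]
    · have hcu : c = u := by omega
      subst hcu
      rw [hs1]
      constructor <;> linarith

/-- Confinement for a downward excursion between consecutive wall times. -/
lemma confine_down {e : ℤ} (he : 2 ≤ e) {π : ℕ → ℤ} {u v t : ℕ}
    (hpath : IsPathOn π u v) (hu : isWall e (π u)) (htv : t ≤ v)
    (hint : ∀ c, u < c → c < t → ¬ isWall e (π c))
    (hs1 : π (u + 1) = π u - 1) :
    ∀ c, u < c → c < t → π u - e < π c ∧ π c < π u := by
  intro c
  induction c with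
  | zero => intro h1 _; exact absurd h1 (Nat.not_lt_zero _)
  | succ c ih =>
    intro h1 h2
    rcases Nat.lt_or_ge u c with h | h
    · have hb := ih h (by omega)
      have hstep := hpath.2 c (by omega) (by omega)
      have hnw : ¬ isWall e (π (c + 1)) := hint _ (by omega) h2
      constructor
      · rcases hstep with h' | h'
        · linarith [hb.1]
        · by_contra hle
          push_neg at hle
          have hpe : π (c + 1) = π u - e := le_antisymm hle (by linarith [hb.1])
          rcases le_or_gt 0 (π u - e) with h0 | h0
          · exact hnw (by rw [hpe]; exact wall_sub hu h0)
          · have := hpath.1 (c + 1) (by omega) (by omega)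
            linarith
      · rcases hstep with h' | h'
        · by_contra hle
          push_neg at hle
          have hpe : π (c + 1) = π u := le_antisymm (by linarith [hb.2]) hle
          exact hnw (by rw [hpe]; exact hu)
        · linarith [hb.2]
    · have hcu : c = u := by omega
      subst hcu
      rw [hs1]
      constructor <;> linarith

lemma end_up {e : ℤ} (he : 2 ≤ e) {π : ℕ → ℤ} {u v t : ℕ}
    (hpath : IsPathOn π u v) (hu : isWall e (π u)) (hut : u < t) (htv : t ≤ v)
    (htw : isWall e (π t)) (hs1 : π (u + 1) = π u + 1)
    (hconf : ∀ c, u < c → c < t → π u < π c ∧ π c < π u + e) :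
    π t = π u ∨ π t = π u + e := by
  rcases eq_or_lt_of_le (Nat.succ_le_of_lt hut) with h | h
  · exfalso
    have hlt : π u < π t := by rw [← h, hs1]; linarith
    have := wall_spacing hu htw hlt
    rw [← h, hs1] at this
    linarith
  · have hb := hconf (t - 1) (by omega) (by omega)
    have hstep := hpath.2 (t - 1) (by omega) (by omega)
    rw [show t - 1 + 1 = t by omega] at hstep
    have h1 : π u ≤ π t := by rcases hstep with h' | h' <;> linarith
    have h2 : π t ≤ π u + e := by rcases hstep with h' | h' <;> linarith
    rcases eq_or_lt_of_le h1 with h' | h'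
    · exact Or.inl h'.symm
    · have := wall_spacing hu htw h'
      exact Or.inr (by linarith)

lemma end_down {e : ℤ} (he : 2 ≤ e) {π : ℕ → ℤ} {u v t : ℕ}
    (hpath : IsPathOn π u v) (hu : isWall e (π u)) (hut : u < t) (htv : t ≤ v)
    (htw : isWall e (π t)) (hs1 : π (u + 1) = π u - 1)
    (hconf : ∀ c, u < c → c < t → π u - e < π c ∧ π c < π u) :
    π t = π u ∨ π t = π u - e := by
  rcases eq_or_lt_of_le (Nat.succ_le_of_lt hut) with h | h
  · exfalso
    have hlt : π t < π u := by rw [← h, hs1]; linarith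
    have := wall_spacing htw hu hlt
    rw [← h, hs1] at this
    linarith
  · have hb := hconf (t - 1) (by omega) (by omega)
    have hstep := hpath.2 (t - 1) (by omega) (by omega)
    rw [show t - 1 + 1 = t by omega] at hstep
    have h1 : π u - e ≤ π t := by rcases hstep with h' | h' <;> linarith
    have h2 : π t ≤ π u := by rcases hstep with h' | h' <;> linarith
    rcases eq_or_lt_of_le h2 with h' | h'
    · exact Or.inl h'
    · have := wall_spacing htw hu h'
      exact Or.inr (by linarith)

/-- Any arc starting before the first wall time `t` after `u` must be exactly `(u, t)`. -/
lemma arc_locate {e : ℤ} {π : ℕ → ℤ} {u v t r s : ℕ}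
    (hut : u < t) (htv : t ≤ v)
    (hint : ∀ c, u < c → c < t → ¬ isWall e (π c))
    (htw : isWall e (π t))
    (hr : u ≤ r) (hrs : r < s) (hsv : s ≤ v)
    (hwr : isWall e (π r)) (hs : π s = π r)
    (hmid : ∀ c, r < c → c < s → ¬ isWall e (π c)) :
    t ≤ r ∨ (r = u ∧ s = t) := by
  rcases Nat.lt_or_ge r t with h | h
  · right
    have hru : r = u := by
      by_contra hne
      exact hint r (by omega) h hwr
    subst hru
    have hst : s = t := by
      rcases Nat.lt_trichotomy s t with h' | h' | h'
      · exact absurd (hs ▸ hwr) (hint s (by omega) h')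
      · exact h'
      · exact absurd htw (hmid t hut h')
    exact ⟨rfl, hst⟩
  · exact Or.inl h

/-! ### Degree computations over one excursion -/

/-- Upward excursion returning to the same wall: a positive arc, degree `-1`. -/
lemma deg_up_eq {e : ℤ} (he : 2 ≤ e) {π : ℕ → ℤ} {u v t : ℕ}
    (hpath : IsPathOn π u v) (hu : isWall e (π u)) (hut2 : u + 1 < t) (htv : t ≤ v)
    (hconf : ∀ c, u < c → c < t → π u < π c ∧ π c < π u + e)
    (hs1 : π (u + 1) = π u + 1) (hend : π t = π u) :
    pathDeg e π u t = -1 := by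
  obtain ⟨m, rfl⟩ : ∃ m, t = m + 1 := ⟨t - 1, by omega⟩
  rw [pathDeg, Finset.sum_Ico_succ_top (by omega : u ≤ m)]
  have hzero : ∀ a ∈ Finset.Ico u m, degStep e (π a) (π (a + 1)) = 0 := by
    intro a ha
    rw [Finset.mem_Ico] at ha
    simp only [degStep]
    rcases eq_or_lt_of_le ha.1 with h | h
    · subst h
      rw [if_neg, if_neg] <;> rintro ⟨-, hlt⟩ <;> rw [hs1] at hlt <;> linarith
    · have hb := hconf a h (by omega)
      have hb1 := hconf (a + 1) (by omega) (by omega)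
      rw [if_neg, if_neg]
      · rintro ⟨hw, -⟩; exact no_wall_above hu hb1.1 hb1.2 hw
      · rintro ⟨hw, -⟩; exact no_wall_above hu hb.1 hb.2 hw
  rw [Finset.sum_eq_zero hzero]
  have hbm := hconf m (by omega) (by omega)
  simp only [degStep]
  rw [if_neg, if_pos]
  · ring
  · exact ⟨hend ▸ hu, by rw [hend]; exact hbm.1⟩
  · rintro ⟨hw, -⟩; exact no_wall_above hu hbm.1 hbm.2 hw

/-- Upward excursion passing through to the next wall: degree `0`. -/
lemma deg_up_through {e : ℤ} (he : 2 ≤ e) {π : ℕ → ℤ} {u v t : ℕ}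
    (hpath : IsPathOn π u v) (hu : isWall e (π u)) (hut : u < t) (htv : t ≤ v)
    (hconf : ∀ c, u < c → c < t → π u < π c ∧ π c < π u + e)
    (hs1 : π (u + 1) = π u + 1) (hend : π t = π u + e) :
    pathDeg e π u t = 0 := by
  rw [pathDeg]
  apply Finset.sum_eq_zero
  intro a ha
  rw [Finset.mem_Ico] at ha
  simp only [degStep]
  have hup : π a < π u + e := by
    rcases eq_or_lt_of_le ha.1 with h | h
    · subst h; linarith
    · exact (hconf a h ha.2).2
  have hnext : ¬ (π (a + 1) < π a) ∨ ¬ isWall e (π (a + 1)) := by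
    rcases eq_or_lt_of_le (Nat.succ_le_of_lt ha.2) with h | h
    · left
      have hat : a + 1 = t := by omega
      rw [hat, hend]; push_neg; linarith
    · right; exact no_wall_above hu (hconf (a + 1) (by omega) h).1 (hconf (a + 1) (by omega) h).2
  rw [if_neg, if_neg]
  · rintro ⟨hw, hlt⟩
    rcases hnext with h' | h'
    · exact h' hlt
    · exact h' hw
  · rintro ⟨hw, hlt⟩
    rcases eq_or_lt_of_le ha.1 with h | h
    · rw [← h, hs1] at hlt; linarith
    · exact no_wall_above hu (hconf a h ha.2).1 (hconf a h ha.2).2 hw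

/-- Downward excursion returning to the same wall: a negative arc, degree `1`. -/
lemma deg_down_eq {e : ℤ} (he : 2 ≤ e) {π : ℕ → ℤ} {u v t : ℕ}
    (hpath : IsPathOn π u v) (hu : isWall e (π u)) (hut2 : u + 1 < t) (htv : t ≤ v)
    (hconf : ∀ c, u < c → c < t → π u - e < π c ∧ π c < π u)
    (hs1 : π (u + 1) = π u - 1) (hend : π t = π u) :
    pathDeg e π u t = 1 := by
  obtain ⟨m, rfl⟩ : ∃ m, t = m + 1 := ⟨t - 1, by omega⟩
  rw [pathDeg, Finset.sum_eq_sum_Ico_succ_bot (by omega : u < m + 1)]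
  have hfirst : degStep e (π u) (π (u + 1)) = 1 := by
    simp only [degStep]
    rw [if_pos ⟨hu, by rw [hs1]; linarith⟩]
  have hzero : ∀ a ∈ Finset.Ico (u + 1) (m + 1), degStep e (π a) (π (a + 1)) = 0 := by
    intro a ha
    rw [Finset.mem_Ico] at ha
    have hb := hconf a (by omega) (by omega)
    simp only [degStep]
    have hnext : ¬ (π (a + 1) < π a) ∨ ¬ isWall e (π (a + 1)) := by
      rcases eq_or_lt_of_le (Nat.succ_le_of_lt ha.2) with h | h
      · left
        have hat : a + 1 = m + 1 := by omega
        rw [hat, hend]; push_neg; linarith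
      · right
        exact no_wall_below hu (hconf (a + 1) (by omega) h).1 (hconf (a + 1) (by omega) h).2
    rw [if_neg, if_neg]
    · rintro ⟨hw, hlt⟩
      rcases hnext with h' | h'
      · exact h' hlt
      · exact h' hw
    · rintro ⟨hw, -⟩
      exact no_wall_below hu hb.1 hb.2 hw
  rw [Finset.sum_eq_zero hzero, hfirst]
  norm_num

/-- Downward excursion passing through to the next wall below: degree `0`. -/
lemma deg_down_through {e : ℤ} (he : 2 ≤ e) {π : ℕ → ℤ} {u v t : ℕ}
    (hpath : IsPathOn π u v) (hu : isWall e (π u)) (hut2 : u + 1 < t) (htv : t ≤ v)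
    (htw : isWall e (π t))
    (hconf : ∀ c, u < c → c < t → π u - e < π c ∧ π c < π u)
    (hs1 : π (u + 1) = π u - 1) (hend : π t = π u - e) :
    pathDeg e π u t = 0 := by
  obtain ⟨m, rfl⟩ : ∃ m, t = m + 1 := ⟨t - 1, by omega⟩
  rw [pathDeg, Finset.sum_Ico_succ_top (by omega : u ≤ m),
    Finset.sum_eq_sum_Ico_succ_bot (by omega : u < m)]
  have hfirst : degStep e (π u) (π (u + 1)) = 1 := by
    simp only [degStep]
    rw [if_pos ⟨hu, by rw [hs1]; linarith⟩]
  have hzero : ∀ a ∈ Finset.Ico (u + 1) m, degStep e (π a) (π (a + 1)) = 0 := by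
    intro a ha
    rw [Finset.mem_Ico] at ha
    have hb := hconf a (by omega) (by omega)
    have hb1 := hconf (a + 1) (by omega) (by omega)
    simp only [degStep]
    rw [if_neg, if_neg]
    · rintro ⟨hw, -⟩; exact no_wall_below hu hb1.1 hb1.2 hw
    · rintro ⟨hw, -⟩; exact no_wall_below hu hb.1 hb.2 hw
  have hbm := hconf m (by omega) (by omega)
  have hlast : degStep e (π m) (π (m + 1)) = -1 := by
    simp only [degStep]
    rw [if_neg, if_pos]
    · exact ⟨htw, by rw [hend]; linarith⟩
    · rintro ⟨hw, -⟩; exact no_wall_below hu hbm.1 hbm.2 hw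
  rw [Finset.sum_eq_zero hzero, hfirst, hlast]
  ring

/-! ### Main induction -/

lemma key (e : ℤ) (he : 2 ≤ e) : ∀ n u v : ℕ, v ≤ u + n → u ≤ v → ∀ π : ℕ → ℤ,
    IsPathOn π u v → isWall e (π u) → isWall e (π v) →
    pathDeg e π u v = ((negArcs e π u v).ncard : ℤ) - ((posArcs e π u v).ncard : ℤ) := by
  have base : ∀ (u : ℕ) (π : ℕ → ℤ),
      pathDeg e π u u = ((negArcs e π u u).ncard : ℤ) - ((posArcs e π u u).ncard : ℤ) := by
    intro u π
    have h1 : posArcs e π u u = ∅ := by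
      ext ⟨r, s⟩
      simp only [posArcs, Set.mem_setOf_eq, Set.mem_empty_iff_false, iff_false]
      rintro ⟨a, b, c, -⟩; omega
    have h2 : negArcs e π u u = ∅ := by
      ext ⟨r, s⟩
      simp only [negArcs, Set.mem_setOf_eq, Set.mem_empty_iff_false, iff_false]
      rintro ⟨a, b, c, -⟩; omega
    rw [pathDeg, Finset.Ico_self, Finset.sum_empty, h1, h2, Set.ncard_empty]
    simp
  intro n
  induction n with
  | zero =>
    intro u v hn huv π hpath hu hv
    have : u = v := by omega
    subst this
    exact base u π
  | succ n IH =>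
    intro u v hn huv π hpath hu hv
    rcases eq_or_lt_of_le huv with rfl | huv'
    · exact base u π
    -- t : the first wall time after u
    have hTne : ∃ k, u < k ∧ k ≤ v ∧ isWall e (π k) := ⟨v, huv', le_refl v, hv⟩
    set t := Nat.find hTne with ht
    obtain ⟨hut, htv, htw⟩ := Nat.find_spec hTne
    have hint : ∀ c, u < c → c < t → ¬ isWall e (π c) := by
      intro c h1 h2 hw
      exact Nat.find_min hTne h2 ⟨h1, by omega, hw⟩
    have hpath' : IsPathOn π t v :=
      ⟨fun a h1 h2 => hpath.1 a (by omega) h2, fun a h1 h2 => hpath.2 a (by omega) h2⟩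
    have hsplit : pathDeg e π u v = pathDeg e π u t + pathDeg e π t v :=
      (Finset.sum_Ico_consecutive _ hut.le htv).symm
    have IH' := IH t v (by omega) htv π hpath' htw hv
    have hposfin := posArcs_finite e π t v
    have hnegfin := negArcs_finite e π t v
    rcases hpath.2 u le_rfl huv' with hs1 | hs1
    · -- first step goes up
      have hconf := confine_up he hpath hu htv hint hs1
      have hend := end_up he hpath hu hut htv htw hs1 hconf
      have ht2 : u + 1 < t := by
        rcases eq_or_lt_of_le (Nat.succ_le_of_lt hut) with h | h
        · exfalso
          rcases hend with h' | h' <;> rw [← h, hs1] at h' <;> linarith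
        · exact h
      rcases hend with hend | hend
      · -- positive arc (u, t)
        have hdeg := deg_up_eq he hpath hu ht2 htv hconf hs1 hend
        have hposeq : posArcs e π u v = insert (u, t) (posArcs e π t v) := by
          ext ⟨r, s⟩
          simp only [posArcs, Set.mem_setOf_eq, Set.mem_insert_iff, Prod.mk.injEq]
          constructor
          · rintro ⟨h1, h2, h3, h4, h5, h6⟩
            have hmid : ∀ c, r < c → c < s → ¬ isWall e (π c) := fun c hc1 hc2 =>
              no_wall_above h4 (h6 c hc1 hc2).1 (h6 c hc1 hc2).2
            rcases arc_locate hut htv hint htw h1 h2 h3 h4 h5 hmid with h | ⟨rfl, rfl⟩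
            · exact Or.inr ⟨h, h2, h3, h4, h5, h6⟩
            · exact Or.inl ⟨rfl, rfl⟩
          · rintro (⟨rfl, rfl⟩ | ⟨h1, h2, h3, h4, h5, h6⟩)
            · exact ⟨le_rfl, hut, htv, hu, hend, fun c hc1 hc2 => hconf c hc1 hc2⟩
            · exact ⟨by omega, h2, h3, h4, h5, h6⟩
        have hnegeq : negArcs e π u v = negArcs e π t v := by
          ext ⟨r, s⟩
          simp only [negArcs, Set.mem_setOf_eq]
          constructor
          · rintro ⟨h1, h2, h3, h4, h5, h6⟩
            have hmid : ∀ c, r < c → c < s → ¬ isWall e (π c) := fun c hc1 hc2 =>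
              no_wall_below h4 (h6 c hc1 hc2).1 (h6 c hc1 hc2).2
            rcases arc_locate hut htv hint htw h1 h2 h3 h4 h5 hmid with h | ⟨hru, hst⟩
            · exact ⟨h, h2, h3, h4, h5, h6⟩
            · exfalso
              have h7 := (h6 (u + 1) (by omega) (by omega)).2
              rw [hru, hs1] at h7; linarith
          · rintro ⟨h1, h2, h3, h4, h5, h6⟩
            exact ⟨by omega, h2, h3, h4, h5, h6⟩
        have hnotmem : (u, t) ∉ posArcs e π t v := fun h => by
          have := h.1; simp only at this; omega
        rw [hsplit, hdeg, IH', hposeq, hnegeq,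
          Set.ncard_insert_of_notMem hnotmem hposfin]
        push_cast
        ring
      · -- pass-through upward
        have hdeg := deg_up_through he hpath hu hut htv hconf hs1 hend
        have hnoarc : ∀ s, ¬ (π s = π u ∧ s = t) ∨ True := fun _ => Or.inr trivial
        have hposeq : posArcs e π u v = posArcs e π t v := by
          ext ⟨r, s⟩
          simp only [posArcs, Set.mem_setOf_eq]
          constructor
          · rintro ⟨h1, h2, h3, h4, h5, h6⟩
            have hmid : ∀ c, r < c → c < s → ¬ isWall e (π c) := fun c hc1 hc2 =>
              no_wall_above h4 (h6 c hc1 hc2).1 (h6 c hc1 hc2).2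
            rcases arc_locate hut htv hint htw h1 h2 h3 h4 h5 hmid with h | ⟨rfl, rfl⟩
            · exact ⟨h, h2, h3, h4, h5, h6⟩
            · exfalso; rw [hend] at h5; linarith
          · rintro ⟨h1, h2, h3, h4, h5, h6⟩
            exact ⟨by omega, h2, h3, h4, h5, h6⟩
        have hnegeq : negArcs e π u v = negArcs e π t v := by
          ext ⟨r, s⟩
          simp only [negArcs, Set.mem_setOf_eq]
          constructor
          · rintro ⟨h1, h2, h3, h4, h5, h6⟩
            have hmid : ∀ c, r < c → c < s → ¬ isWall e (π c) := fun c hc1 hc2 =>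
              no_wall_below h4 (h6 c hc1 hc2).1 (h6 c hc1 hc2).2
            rcases arc_locate hut htv hint htw h1 h2 h3 h4 h5 hmid with h | ⟨rfl, rfl⟩
            · exact ⟨h, h2, h3, h4, h5, h6⟩
            · exfalso; rw [hend] at h5; linarith
          · rintro ⟨h1, h2, h3, h4, h5, h6⟩
            exact ⟨by omega, h2, h3, h4, h5, h6⟩
        rw [hsplit, hdeg, IH', hposeq, hnegeq]
        ring
    · -- first step goes down
      have hconf := confine_down he hpath hu htv hint hs1
      have hend := end_down he hpath hu hut htv htw hs1 hconf
      have ht2 : u + 1 < t := by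
        rcases eq_or_lt_of_le (Nat.succ_le_of_lt hut) with h | h
        · exfalso
          rcases hend with h' | h' <;> rw [← h, hs1] at h' <;> linarith
        · exact h
      rcases hend with hend | hend
      · -- negative arc (u, t)
        have hdeg := deg_down_eq he hpath hu ht2 htv hconf hs1 hend
        have hnegeq : negArcs e π u v = insert (u, t) (negArcs e π t v) := by
          ext ⟨r, s⟩
          simp only [negArcs, Set.mem_setOf_eq, Set.mem_insert_iff, Prod.mk.injEq]
          constructor
          · rintro ⟨h1, h2, h3, h4, h5, h6⟩
            have hmid : ∀ c, r < c → c < s → ¬ isWall e (π c) := fun c hc1 hc2 =>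
              no_wall_below h4 (h6 c hc1 hc2).1 (h6 c hc1 hc2).2
            rcases arc_locate hut htv hint htw h1 h2 h3 h4 h5 hmid with h | ⟨rfl, rfl⟩
            · exact Or.inr ⟨h, h2, h3, h4, h5, h6⟩
            · exact Or.inl ⟨rfl, rfl⟩
          · rintro (⟨rfl, rfl⟩ | ⟨h1, h2, h3, h4, h5, h6⟩)
            · exact ⟨le_rfl, hut, htv, hu, hend, fun c hc1 hc2 => hconf c hc1 hc2⟩
            · exact ⟨by omega, h2, h3, h4, h5, h6⟩
        have hposeq : posArcs e π u v = posArcs e π t v := by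
          ext ⟨r, s⟩
          simp only [posArcs, Set.mem_setOf_eq]
          constructor
          · rintro ⟨h1, h2, h3, h4, h5, h6⟩
            have hmid : ∀ c, r < c → c < s → ¬ isWall e (π c) := fun c hc1 hc2 =>
              no_wall_above h4 (h6 c hc1 hc2).1 (h6 c hc1 hc2).2
            rcases arc_locate hut htv hint htw h1 h2 h3 h4 h5 hmid with h | ⟨hru, hst⟩
            · exact ⟨h, h2, h3, h4, h5, h6⟩
            · exfalso
              have h7 := (h6 (u + 1) (by omega) (by omega)).1
              rw [hru, hs1] at h7; linarith
          · rintro ⟨h1, h2, h3, h4, h5, h6⟩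
            exact ⟨by omega, h2, h3, h4, h5, h6⟩
        have hnotmem : (u, t) ∉ negArcs e π t v := fun h => by
          have := h.1; simp only at this; omega
        rw [hsplit, hdeg, IH', hposeq, hnegeq,
          Set.ncard_insert_of_notMem hnotmem hnegfin]
        push_cast
        ring
      · -- pass-through downward
        have hdeg := deg_down_through he hpath hu ht2 htv htw hconf hs1 hend
        have hposeq : posArcs e π u v = posArcs e π t v := by
          ext ⟨r, s⟩
          simp only [posArcs, Set.mem_setOf_eq]
          constructor
          · rintro ⟨h1, h2, h3, h4, h5, h6⟩
            have hmid : ∀ c, r < c → c < s → ¬ isWall e (π c) := fun c hc1 hc2 =>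
              no_wall_above h4 (h6 c hc1 hc2).1 (h6 c hc1 hc2).2
            rcases arc_locate hut htv hint htw h1 h2 h3 h4 h5 hmid with h | ⟨rfl, rfl⟩
            · exact ⟨h, h2, h3, h4, h5, h6⟩
            · exfalso; rw [hend] at h5; linarith
          · rintro ⟨h1, h2, h3, h4, h5, h6⟩
            exact ⟨by omega, h2, h3, h4, h5, h6⟩
        have hnegeq : negArcs e π u v = negArcs e π t v := by
          ext ⟨r, s⟩
          simp only [negArcs, Set.mem_setOf_eq]
          constructor
          · rintro ⟨h1, h2, h3, h4, h5, h6⟩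
            have hmid : ∀ c, r < c → c < s → ¬ isWall e (π c) := fun c hc1 hc2 =>
              no_wall_below h4 (h6 c hc1 hc2).1 (h6 c hc1 hc2).2
            rcases arc_locate hut htv hint htw h1 h2 h3 h4 h5 hmid with h | ⟨rfl, rfl⟩
            · exact ⟨h, h2, h3, h4, h5, h6⟩
            · exfalso; rw [hend] at h5; linarith
          · rintro ⟨h1, h2, h3, h4, h5, h6⟩
            exact ⟨by omega, h2, h3, h4, h5, h6⟩
        rw [hsplit, hdeg, IH', hposeq, hnegeq]
        ring

theorem stmt3 (e : ℤ) (he : 2 ≤ e) (u v : ℕ) (huv : u ≤ v) (π : ℕ → ℤ)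
    (hpath : IsPathOn π u v) (hu : isWall e (π u)) (hv : isWall e (π v)) :
    pathDeg e π u v = ((negArcs e π u v).ncard : ℤ) - ((posArcs e π u v).ncard : ℤ) :=
  key e he (v - u) u v (by omega) huv π hpath hu hv
end
end

section
/- Fix $e\ge2$. For $\pi\in\mathsf P^+_n$ (a nonnegative lattice path of type $A_1$ starting at 0 with $\pm1$ steps), define $r_e(\pi)\in\{0,1\}$ as follows: $r_e(\pi)=1$ if there exists $a\in[0,n]$ with $\pi(a)\in H=\{me-1:m>0\}$ and, taking $a$ maximal with this property and $m$ with $\pi(a)=me-1$, one has $\pi(n)<me-1$; otherwise $r_e(\pi)=0$. Then $\deg_e(\pi)=|\mathsf A^-(\pi)|-|\mathsf A^+(\pi)|+r_e(\pi)$, where $\mathsf A^\pm(\pi)$ are the sets of positive/negative arcs of $\pi$ and $\deg_e$ is the step-degree sum. -/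
open scoped Classical
noncomputable section

def wallTimes (f : ℤ) (n : ℕ) (π : ℕ → ℤ) : Finset ℕ :=
  (Finset.range (n + 1)).filter fun a => isWall f (π a)

/-- The regularisation map on paths: reflect the tail after the last wall
visit upward in the wall, if the endpoint lies strictly below that wall. -/
def regPath (f : ℤ) (n : ℕ) (π : ℕ → ℤ) : ℕ → ℤ :=
  if h : (wallTimes f n π).Nonempty then
    let a := (wallTimes f n π).max' h
    if π n < π a then (fun b => if b ≤ a then π b else 2 * π a - π b) else π
  else π

/-- `r_e(π)`: equals 1 iff the path meets a wall and its endpoint lies strictly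
below the wall of its last wall visit. -/
def rE (e : ℤ) (n : ℕ) (π : ℕ → ℤ) : ℤ :=
  if h : (wallTimes e n π).Nonempty then
    (if π n < π ((wallTimes e n π).max' h) then 1 else 0)
  else 0

/-! ### Auxiliary lemmas -/

lemma isWall_iff {e x : ℤ} : isWall e x ↔ 0 < x + 1 ∧ e ∣ x + 1 := by
  unfold isWall
  constructor
  · rintro ⟨h1, h2⟩; exact ⟨h1, Int.dvd_of_emod_eq_zero h2⟩
  · rintro ⟨h1, h2⟩; exact ⟨h1, Int.emod_eq_zero_of_dvd h2⟩

lemma wall_pos {e x : ℤ} (he : 2 ≤ e) (h : isWall e x) : 0 < x := by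
  obtain ⟨h1, h2⟩ := isWall_iff.mp h
  have := Int.le_of_dvd h1 h2
  omega

lemma wall_eq_of_abs_lt {e w1 w2 : ℤ} (hw1 : isWall e w1) (hw2 : isWall e w2)
    (h1 : w1 - e < w2) (h2 : w2 < w1 + e) : w2 = w1 := by
  obtain ⟨p1, d1⟩ := isWall_iff.mp hw1
  obtain ⟨p2, d2⟩ := isWall_iff.mp hw2
  have hd : e ∣ w2 - w1 := by
    have h := dvd_sub d2 d1
    simpa using h
  by_contra hne
  have h0 : w2 - w1 ≠ 0 := by omega
  have hda : e ∣ |w2 - w1| := (dvd_abs _ _).mpr hd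
  have hle := Int.le_of_dvd (abs_pos.mpr h0) hda
  have hlt : |w2 - w1| < e := abs_lt.mpr ⟨by omega, by omega⟩
  omega

lemma wall_add_e {e w : ℤ} (he : 2 ≤ e) (hw : isWall e w) : isWall e (w + e) := by
  obtain ⟨p, d⟩ := isWall_iff.mp hw
  refine isWall_iff.mpr ⟨by omega, ?_⟩
  have h : w + e + 1 = (w + 1) + e := by ring
  rw [h]; exact dvd_add d dvd_rfl

lemma wall_sub_e {e w : ℤ} (hpos : 0 < w - e + 1) (hw : isWall e w) : isWall e (w - e) := by
  obtain ⟨p, d⟩ := isWall_iff.mp hw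
  refine isWall_iff.mpr ⟨hpos, ?_⟩
  have h : w - e + 1 = (w + 1) - e := by ring
  rw [h]; exact dvd_sub d dvd_rfl

/-- Discrete intermediate value theorem, upward form. -/
lemma ivt_up (π : ℕ → ℤ) (u : ℕ) :
    ∀ v, u ≤ v → (∀ a, u ≤ a → a < v → π (a + 1) = π a + 1 ∨ π (a + 1) = π a - 1) →
    ∀ c : ℤ, π u ≤ c → c ≤ π v → ∃ a, u ≤ a ∧ a ≤ v ∧ π a = c := by
  intro v
  induction v with
  | zero =>
    intro huv _ c h1 h2
    have hu : u = 0 := by omega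
    subst hu
    exact ⟨0, le_refl _, le_refl _, (le_antisymm h2 h1).symm⟩
  | succ v ih =>
    intro huv hstep c h1 h2
    by_cases hv : u = v + 1
    · have h2' : c ≤ π u := by rw [hv]; exact h2
      exact ⟨u, le_refl _, by omega, le_antisymm h1 h2'⟩
    · have huv' : u ≤ v := by omega
      have hstep' : ∀ a, u ≤ a → a < v → π (a + 1) = π a + 1 ∨ π (a + 1) = π a - 1 :=
        fun a ha hb => hstep a ha (by omega)
      rcases hstep v huv' (by omega) with h | h
      · by_cases hc : c ≤ π v
        · obtain ⟨a, ha1, ha2, ha3⟩ := ih huv' hstep' c h1 hc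
          exact ⟨a, ha1, by omega, ha3⟩
        · have : π (v + 1) = c := by omega
          exact ⟨v + 1, by omega, le_refl _, this⟩
      · have hc : c ≤ π v := by omega
        obtain ⟨a, ha1, ha2, ha3⟩ := ih huv' hstep' c h1 hc
        exact ⟨a, ha1, by omega, ha3⟩

/-- Discrete intermediate value theorem, downward form. -/
lemma ivt_down (π : ℕ → ℤ) (u : ℕ) :
    ∀ v, u ≤ v → (∀ a, u ≤ a → a < v → π (a + 1) = π a + 1 ∨ π (a + 1) = π a - 1) →
    ∀ c : ℤ, π v ≤ c → c ≤ π u → ∃ a, u ≤ a ∧ a ≤ v ∧ π a = c := by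
  intro v
  induction v with
  | zero =>
    intro huv _ c h1 h2
    have hu : u = 0 := by omega
    subst hu
    exact ⟨0, le_refl _, le_refl _, le_antisymm h1 h2⟩
  | succ v ih =>
    intro huv hstep c h1 h2
    by_cases hv : u = v + 1
    · have h1' : π u ≤ c := by rw [hv]; exact h1
      exact ⟨u, le_refl _, by omega, le_antisymm h1' h2⟩
    · have huv' : u ≤ v := by omega
      have hstep' : ∀ a, u ≤ a → a < v → π (a + 1) = π a + 1 ∨ π (a + 1) = π a - 1 :=
        fun a ha hb => hstep a ha (by omega)
      rcases hstep v huv' (by omega) with h | h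
      · have hc : π v ≤ c := by omega
        obtain ⟨a, ha1, ha2, ha3⟩ := ih huv' hstep' c hc h2
        exact ⟨a, ha1, by omega, ha3⟩
      · by_cases hc : π v ≤ c
        · obtain ⟨a, ha1, ha2, ha3⟩ := ih huv' hstep' c hc h2
          exact ⟨a, ha1, by omega, ha3⟩
        · have : π (v + 1) = c := by omega
          exact ⟨v + 1, by omega, le_refl _, this⟩

/-- After leaving a wall upward and not meeting any wall, the path stays in
the open strip above the wall. -/
lemma strip_up {e : ℤ} (he : 2 ≤ e) (π : ℕ → ℤ) (r s : ℕ)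
    (hstep : ∀ a, r ≤ a → a < s → π (a + 1) = π a + 1 ∨ π (a + 1) = π a - 1)
    (hw : isWall e (π r)) (hup : π (r + 1) = π r + 1)
    (hnw : ∀ c, r < c → c < s → ¬ isWall e (π c)) :
    ∀ c, r < c → c < s → π r < π c ∧ π c < π r + e := by
  intro c
  induction c with
  | zero => intro h1 _; exact absurd h1 (Nat.not_lt_zero r)
  | succ b ih =>
    intro h1 h2
    by_cases hb : b = r
    · subst hb
      rw [hup]
      constructor <;> omega
    · have hb1 : r < b := by omega
      have hb2 : b < s := by omega
      obtain ⟨hl, hu⟩ := ih hb1 (by omega)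
      have hbw := hnw (b + 1) h1 h2
      have hne1 : π (b + 1) ≠ π r := fun hh => hbw (hh ▸ hw)
      have hne2 : π (b + 1) ≠ π r + e := fun hh => hbw (hh ▸ wall_add_e he hw)
      rcases hstep b (by omega) (by omega) with h | h <;> constructor <;> omega

/-- After leaving a wall downward and not meeting any wall, the nonnegative path
stays in the open strip below the wall. -/
lemma strip_down {e : ℤ} (he : 2 ≤ e) (π : ℕ → ℤ) (r s : ℕ)
    (hstep : ∀ a, r ≤ a → a < s → π (a + 1) = π a + 1 ∨ π (a + 1) = π a - 1)
    (hnonneg : ∀ a, r ≤ a → a ≤ s → 0 ≤ π a)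
    (hw : isWall e (π r)) (hdn : π (r + 1) = π r - 1)
    (hnw : ∀ c, r < c → c < s → ¬ isWall e (π c)) :
    ∀ c, r < c → c < s → π r - e < π c ∧ π c < π r := by
  intro c
  induction c with
  | zero => intro h1 _; exact absurd h1 (Nat.not_lt_zero r)
  | succ b ih =>
    intro h1 h2
    by_cases hb : b = r
    · subst hb
      rw [hdn]
      constructor <;> omega
    · have hb1 : r < b := by omega
      have hb2 : b < s := by omega
      obtain ⟨hl, hu⟩ := ih hb1 (by omega)
      have hbw := hnw (b + 1) h1 h2
      have hne1 : π (b + 1) ≠ π r := fun hh => hbw (hh ▸ hw)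
      have hne2 : π (b + 1) ≠ π r - e := by
        intro hh
        have hge : 0 ≤ π (b + 1) := hnonneg (b + 1) (by omega) (by omega)
        exact hbw (hh ▸ wall_sub_e (by omega) hw)
      rcases hstep b (by omega) (by omega) with h | h <;> constructor <;> omega

lemma mem_wallTimes {e : ℤ} {n a : ℕ} {π : ℕ → ℤ} :
    a ∈ wallTimes e n π ↔ a ≤ n ∧ isWall e (π a) := by
  simp [wallTimes, Nat.lt_succ_iff]

/-! ### degStep computation lemmas -/

lemma degStep_of_lt {e u v : ℤ} (h : u < v) : degStep e u v = 0 := by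
  unfold degStep
  split_ifs with h1 h2
  · exact absurd h1.2 (by omega)
  · exact absurd h2.2 (by omega)
  · rfl

lemma degStep_wall_src {e u v : ℤ} (hw : isWall e u) (h : v < u) : degStep e u v = 1 := by
  unfold degStep
  rw [if_pos ⟨hw, h⟩]

lemma degStep_notwalls {e u v : ℤ} (h1 : ¬ isWall e u) (h2 : ¬ isWall e v) :
    degStep e u v = 0 := by
  unfold degStep
  split_ifs with ha hb
  · exact absurd ha.1 h1
  · exact absurd hb.1 h2
  · rfl

lemma degStep_onto {e u v : ℤ} (h1 : ¬ isWall e u) (hw : isWall e v) (h : v < u) :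
    degStep e u v = -1 := by
  unfold degStep
  rw [if_neg (fun hh => h1 hh.1), if_pos ⟨hw, h⟩]

lemma widen_pos {e : ℤ} {π : ℕ → ℤ} {s n r s' : ℕ} (h : s ≤ n)
    (ha : IsPosArc e π 0 s r s') : IsPosArc e π 0 n r s' := by
  obtain ⟨h0, h1, h2, h3⟩ := ha
  exact ⟨h0, h1, h2.trans h, h3⟩

lemma widen_neg {e : ℤ} {π : ℕ → ℤ} {s n r s' : ℕ} (h : s ≤ n)
    (ha : IsNegArc e π 0 s r s') : IsNegArc e π 0 n r s' := by
  obtain ⟨h0, h1, h2, h3⟩ := ha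
  exact ⟨h0, h1, h2.trans h, h3⟩

lemma split_posArc {e : ℤ} (he : 2 ≤ e) {π : ℕ → ℤ} {n s : ℕ} (hsn : s < n)
    (hws : isWall e (π s))
    (hnw : ∀ a, s < a → a < n → ¬ isWall e (π a)) {r s' : ℕ}
    (h : IsPosArc e π 0 n r s') : (r = s ∧ s' = n) ∨ IsPosArc e π 0 s r s' := by
  obtain ⟨h0, h1, h2, h3, h4, h5⟩ := h
  have hws' : isWall e (π s') := h4 ▸ h3
  have hr : r ≤ s := by
    by_contra hr
    exact hnw r (by omega) (by omega) h3
  by_cases hcase : s' ≤ s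
  · right; exact ⟨h0, h1, hcase, h3, h4, h5⟩
  · have hs'n : s' = n := by
      by_contra hne
      exact hnw s' (by omega) (by omega) hws'
    left
    refine ⟨?_, hs'n⟩
    by_contra hrs
    have hrs' : r < s := by omega
    have hbound := h5 s hrs' (by omega)
    have heq := wall_eq_of_abs_lt h3 hws (by omega) (by omega)
    omega

lemma split_negArc {e : ℤ} (he : 2 ≤ e) {π : ℕ → ℤ} {n s : ℕ} (hsn : s < n)
    (hws : isWall e (π s))
    (hnw : ∀ a, s < a → a < n → ¬ isWall e (π a)) {r s' : ℕ}
    (h : IsNegArc e π 0 n r s') : (r = s ∧ s' = n) ∨ IsNegArc e π 0 s r s' := by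
  obtain ⟨h0, h1, h2, h3, h4, h5⟩ := h
  have hws' : isWall e (π s') := h4 ▸ h3
  have hr : r ≤ s := by
    by_contra hr
    exact hnw r (by omega) (by omega) h3
  by_cases hcase : s' ≤ s
  · right; exact ⟨h0, h1, hcase, h3, h4, h5⟩
  · have hs'n : s' = n := by
      by_contra hne
      exact hnw s' (by omega) (by omega) hws'
    left
    refine ⟨?_, hs'n⟩
    by_contra hrs
    have hrs' : r < s := by omega
    have hbound := h5 s hrs' (by omega)
    have heq := wall_eq_of_abs_lt h3 hws (by omega) (by omega)
    omega

lemma rE_wall_end {e : ℤ} {n : ℕ} {π : ℕ → ℤ} (h : isWall e (π n)) : rE e n π = 0 := by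
  have hmem : n ∈ wallTimes e n π := mem_wallTimes.mpr ⟨le_refl n, h⟩
  have hne : (wallTimes e n π).Nonempty := ⟨n, hmem⟩
  have hmax : (wallTimes e n π).max' hne = n :=
    le_antisymm (Finset.max'_le _ hne _ (fun y hy => (mem_wallTimes.mp hy).1))
      (Finset.le_max' _ n hmem)
  unfold rE
  rw [dif_pos hne, hmax, if_neg (lt_irrefl _)]

/-! ### Main lemma -/

lemma main_lemma (e : ℤ) (he : 2 ≤ e) : ∀ n : ℕ, ∀ π : ℕ → ℤ, π 0 = 0 → IsPathOn π 0 n →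
    pathDeg e π 0 n =
      ((negArcs e π 0 n).ncard : ℤ) - ((posArcs e π 0 n).ncard : ℤ) + rE e n π := by
  intro n
  induction n using Nat.strong_induction_on with
  | _ n IH =>
  intro π h0 hpath
  obtain ⟨hnn, hst⟩ := hpath
  by_cases hne : (wallTimes e n π).Nonempty
  swap
  · -- Case A: no wall visits at all
    have hnw : ∀ a, a ≤ n → ¬ isWall e (π a) := fun a ha hw =>
      hne ⟨a, mem_wallTimes.mpr ⟨ha, hw⟩⟩
    have hdeg : pathDeg e π 0 n = 0 := Finset.sum_eq_zero (by
      intro a ha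
      rw [Finset.mem_Ico] at ha
      exact degStep_notwalls (hnw a (by omega)) (hnw (a + 1) (by omega)))
    have hposE : posArcs e π 0 n = ∅ := by
      ext ⟨r, s'⟩
      simp only [posArcs, Set.mem_setOf_eq, Set.mem_empty_iff_false, iff_false]
      rintro ⟨-, h1, h2, h3, -⟩
      exact hnw r (by omega) h3
    have hnegE : negArcs e π 0 n = ∅ := by
      ext ⟨r, s'⟩
      simp only [negArcs, Set.mem_setOf_eq, Set.mem_empty_iff_false, iff_false]
      rintro ⟨-, h1, h2, h3, -⟩
      exact hnw r (by omega) h3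
    rw [hdeg, hposE, hnegE]
    unfold rE
    rw [dif_neg hne]
    simp
  · set t := (wallTimes e n π).max' hne with ht
    have htmem := (wallTimes e n π).max'_mem hne
    rw [← ht, mem_wallTimes] at htmem
    obtain ⟨htn, hwt⟩ := htmem
    have hmax : ∀ a, a ≤ n → isWall e (π a) → a ≤ t := fun a ha hw =>
      Finset.le_max' _ a (mem_wallTimes.mpr ⟨ha, hw⟩)
    have hrE : rE e n π = if π n < π t then 1 else 0 := by
      unfold rE
      rw [dif_pos hne, ← ht]
    by_cases hlt : t < n
    · -- Case B: last wall visit is before time n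
      have hnw2 : ∀ a, t < a → a ≤ n → ¬ isWall e (π a) := fun a h1 h2 hw =>
        absurd (hmax a h2 hw) (by omega)
      have hsplit : pathDeg e π 0 n = pathDeg e π 0 t + pathDeg e π t n :=
        (Finset.sum_Ico_consecutive _ (Nat.zero_le t) (le_of_lt hlt)).symm
      have htail : pathDeg e π t n = degStep e (π t) (π (t + 1)) :=
        Finset.sum_eq_single_of_mem t (Finset.mem_Ico.mpr ⟨le_refl t, hlt⟩)
          (fun b hb hbne => by
            rw [Finset.mem_Ico] at hb
            exact degStep_notwalls (hnw2 b (by omega) (by omega))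
              (hnw2 (b + 1) (by omega) (by omega)))
      have hposEq : posArcs e π 0 n = posArcs e π 0 t := by
        ext ⟨r, s'⟩
        simp only [posArcs, Set.mem_setOf_eq]
        constructor
        · intro h
          rcases split_posArc he hlt hwt (fun a h1 h2 => hnw2 a h1 (le_of_lt h2)) h with
            ⟨hr, hs⟩ | h'
          · exfalso
            obtain ⟨-, -, -, h3, h4, -⟩ := h
            rw [hs] at h4
            exact hnw2 n hlt (le_refl n) (h4 ▸ h3)
          · exact h'
        · exact widen_pos (le_of_lt hlt)
      have hnegEq : negArcs e π 0 n = negArcs e π 0 t := by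
        ext ⟨r, s'⟩
        simp only [negArcs, Set.mem_setOf_eq]
        constructor
        · intro h
          rcases split_negArc he hlt hwt (fun a h1 h2 => hnw2 a h1 (le_of_lt h2)) h with
            ⟨hr, hs⟩ | h'
          · exfalso
            obtain ⟨-, -, -, h3, h4, -⟩ := h
            rw [hs] at h4
            exact hnw2 n hlt (le_refl n) (h4 ▸ h3)
          · exact h'
        · exact widen_neg (le_of_lt hlt)
      have hpath' : IsPathOn π 0 t :=
        ⟨fun a h1 h2 => hnn a h1 (by omega), fun a h1 h2 => hst a h1 (by omega)⟩
      have hIH := IH t hlt π h0 hpath'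
      rw [rE_wall_end hwt, add_zero] at hIH
      rcases hst t (Nat.zero_le t) hlt with hup | hdn
      · have hstep0 : degStep e (π t) (π (t + 1)) = 0 := degStep_of_lt (by omega)
        have hrn : ¬ (π n < π t) := by
          intro hcon
          obtain ⟨b, hb1, hb2, hb3⟩ := ivt_down π (t + 1) n (by omega)
            (fun a h1 h2 => hst a (by omega) h2) (π t) (by omega) (by omega)
          exact hnw2 b (by omega) hb2 (hb3 ▸ hwt)
        rw [hsplit, htail, hstep0, hIH, hposEq, hnegEq, hrE, if_neg hrn]
      · have hstep1 : degStep e (π t) (π (t + 1)) = 1 := degStep_wall_src hwt (by omega)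
        have hrn : π n < π t := by
          by_contra hcon
          push_neg at hcon
          obtain ⟨b, hb1, hb2, hb3⟩ := ivt_up π (t + 1) n (by omega)
            (fun a h1 h2 => hst a (by omega) h2) (π t) (by omega) hcon
          exact hnw2 b (by omega) hb2 (hb3 ▸ hwt)
        rw [hsplit, htail, hstep1, hIH, hposEq, hnegEq, hrE, if_pos hrn]
    · -- Case C: π n is a wall
      have htn' : t = n := by omega
      have hwn : isWall e (π n) := htn' ▸ hwt
      have hrE0 : rE e n π = 0 := rE_wall_end hwn
      have hn0 : 0 < n := by
        rcases Nat.eq_zero_or_pos n with h | h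
        · subst h
          rw [h0] at hwn
          exact absurd (wall_pos he hwn) (lt_irrefl 0)
        · exact h
      by_cases hne2 : (wallTimes e (n - 1) π).Nonempty
      swap
      · -- only wall visit is at time n
        have hnw3 : ∀ a, a < n → ¬ isWall e (π a) := fun a ha hw =>
          hne2 ⟨a, mem_wallTimes.mpr ⟨by omega, hw⟩⟩
        have hlt' : ∀ a, a < n → π a < π n := by
          intro a ha
          by_contra hcon
          push_neg at hcon
          obtain ⟨b, hb1, hb2, hb3⟩ := ivt_up π 0 a (Nat.zero_le a)
            (fun x h1 h2 => hst x h1 (by omega)) (π n)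
            (by rw [h0]; exact (wall_pos he hwn).le) hcon
          exact hnw3 b (by omega) (hb3 ▸ hwn)
        have hdeg : pathDeg e π 0 n = 0 := Finset.sum_eq_zero (by
          intro a ha
          rw [Finset.mem_Ico] at ha
          by_cases hc : a + 1 = n
          · rw [hc]
            exact degStep_of_lt (hlt' a ha.2)
          · exact degStep_notwalls (hnw3 a ha.2) (hnw3 (a + 1) (by omega)))
        have hposE : posArcs e π 0 n = ∅ := by
          ext ⟨r, s'⟩
          simp only [posArcs, Set.mem_setOf_eq, Set.mem_empty_iff_false, iff_false]
          rintro ⟨-, h1, h2, h3, -⟩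
          exact hnw3 r (by omega) h3
        have hnegE : negArcs e π 0 n = ∅ := by
          ext ⟨r, s'⟩
          simp only [negArcs, Set.mem_setOf_eq, Set.mem_empty_iff_false, iff_false]
          rintro ⟨-, h1, h2, h3, -⟩
          exact hnw3 r (by omega) h3
        rw [hdeg, hposE, hnegE, hrE0]
        simp
      · set s := (wallTimes e (n - 1) π).max' hne2 with hs
        have hsmem := (wallTimes e (n - 1) π).max'_mem hne2
        rw [← hs, mem_wallTimes] at hsmem
        obtain ⟨hsn1, hws⟩ := hsmem
        have hsn : s < n := by omega
        have hmaxs : ∀ a, a < n → isWall e (π a) → a ≤ s := fun a ha hw =>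
          Finset.le_max' _ a (mem_wallTimes.mpr ⟨by omega, hw⟩)
        have hnw4 : ∀ a, s < a → a < n → ¬ isWall e (π a) := fun a h1 h2 hw =>
          absurd (hmaxs a h2 hw) (by omega)
        have hs2 : s + 2 ≤ n := by
          by_contra hcon
          have hn1 : n = s + 1 := by omega
          have hwn' : isWall e (π (s + 1)) := hn1 ▸ hwn
          rcases hst s (Nat.zero_le s) hsn with h | h
          · have := wall_eq_of_abs_lt hws hwn' (by omega) (by omega)
            omega
          · have := wall_eq_of_abs_lt hws hwn' (by omega) (by omega)
            omega
        obtain ⟨m, rfl⟩ : ∃ m, n = m + 1 := ⟨n - 1, by omega⟩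
        have hpath' : IsPathOn π 0 s :=
          ⟨fun a h1 h2 => hnn a h1 (by omega), fun a h1 h2 => hst a h1 (by omega)⟩
        have hIH := IH s (by omega) π h0 hpath'
        rw [rE_wall_end hws, add_zero] at hIH
        have hsplit : pathDeg e π 0 (m + 1) = pathDeg e π 0 s + pathDeg e π s (m + 1) :=
          (Finset.sum_Ico_consecutive _ (Nat.zero_le s) (by omega)).symm
        have htail : pathDeg e π s (m + 1) =
            degStep e (π s) (π (s + 1)) + degStep e (π m) (π (m + 1)) := by
          unfold pathDeg
          rw [Finset.sum_Ico_succ_top (show s ≤ m by omega)]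
          congr 1
          exact Finset.sum_eq_single_of_mem s (Finset.mem_Ico.mpr ⟨le_refl s, by omega⟩)
            (fun b hb hbne => by
              rw [Finset.mem_Ico] at hb
              exact degStep_notwalls (hnw4 b (by omega) (by omega))
                (hnw4 (b + 1) (by omega) (by omega)))
        have hnotmemP : (s, m + 1) ∉ posArcs e π 0 s := by
          intro hmem
          have := hmem.2.2.1
          omega
        have hnotmemN : (s, m + 1) ∉ negArcs e π 0 s := by
          intro hmem
          have := hmem.2.2.1
          omega
        rcases hst s (Nat.zero_le s) (by omega) with hup | hdn
        · -- first step up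
          have hint : ∀ c, s < c → c < m + 1 → π s < π c ∧ π c < π s + e :=
            strip_up he π s (m + 1) (fun a h1 h2 => hst a (Nat.zero_le a) h2) hws hup hnw4
          have hm1 := hint m (by omega) (by omega)
          have hstepm := hst m (Nat.zero_le m) (by omega)
          have hclass : π (m + 1) = π s ∨ π (m + 1) = π s + e := by
            by_cases hc : π (m + 1) < π s + e
            · left
              exact wall_eq_of_abs_lt hws hwn (by omega) hc
            · right
              omega
          rcases hclass with hret | hesc
          · -- positive arc closes
            have hstep1 : degStep e (π s) (π (s + 1)) = 0 := degStep_of_lt (by omega)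
            have hstep2 : degStep e (π m) (π (m + 1)) = -1 :=
              degStep_onto (hnw4 m (by omega) (by omega)) hwn (by omega)
            have harc : IsPosArc e π 0 (m + 1) s (m + 1) :=
              ⟨Nat.zero_le s, by omega, le_refl _, hws, hret, fun c h1 h2 => hint c h1 h2⟩
            have hposEq : posArcs e π 0 (m + 1) = insert (s, m + 1) (posArcs e π 0 s) := by
              ext ⟨r, s'⟩
              simp only [posArcs, Set.mem_setOf_eq, Set.mem_insert_iff, Prod.mk.injEq]
              constructor
              · intro h
                rcases split_posArc he (by omega) hws hnw4 h with ⟨h1, h2⟩ | h'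
                · left; exact ⟨h1, h2⟩
                · right; exact h'
              · rintro (⟨rfl, rfl⟩ | h')
                · exact harc
                · exact widen_pos (by omega) h'
            have hnegEq : negArcs e π 0 (m + 1) = negArcs e π 0 s := by
              ext ⟨r, s'⟩
              simp only [negArcs, Set.mem_setOf_eq]
              constructor
              · intro h
                rcases split_negArc he (by omega) hws hnw4 h with ⟨h1, h2⟩ | h'
                · exfalso
                  obtain ⟨-, -, -, -, -, h5⟩ := h
                  subst h1; subst h2
                  have := h5 (s + 1) (by omega) (by omega)
                  omega
                · exact h'
              · exact widen_neg (by omega)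
            have hins : (posArcs e π 0 (m + 1)).ncard = (posArcs e π 0 s).ncard + 1 := by
              rw [hposEq, Set.ncard_insert_of_notMem hnotmemP (posArcs_finite e π 0 s)]
            rw [hsplit, htail, hstep1, hstep2, hIH, hrE0, hnegEq, hins]
            push_cast
            ring
          · -- escaped to the next wall up
            have hstep1 : degStep e (π s) (π (s + 1)) = 0 := degStep_of_lt (by omega)
            have hstep2 : degStep e (π m) (π (m + 1)) = 0 := degStep_of_lt (by omega)
            have hposEq : posArcs e π 0 (m + 1) = posArcs e π 0 s := by
              ext ⟨r, s'⟩
              simp only [posArcs, Set.mem_setOf_eq]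
              constructor
              · intro h
                rcases split_posArc he (by omega) hws hnw4 h with ⟨h1, h2⟩ | h'
                · exfalso
                  obtain ⟨-, -, -, -, h4, -⟩ := h
                  subst h1; subst h2
                  omega
                · exact h'
              · exact widen_pos (by omega)
            have hnegEq : negArcs e π 0 (m + 1) = negArcs e π 0 s := by
              ext ⟨r, s'⟩
              simp only [negArcs, Set.mem_setOf_eq]
              constructor
              · intro h
                rcases split_negArc he (by omega) hws hnw4 h with ⟨h1, h2⟩ | h'
                · exfalso
                  obtain ⟨-, -, -, -, h4, -⟩ := h
                  subst h1; subst h2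
                  omega
                · exact h'
              · exact widen_neg (by omega)
            rw [hsplit, htail, hstep1, hstep2, hIH, hrE0, hposEq, hnegEq]
            ring
        · -- first step down
          have hint : ∀ c, s < c → c < m + 1 → π s - e < π c ∧ π c < π s :=
            strip_down he π s (m + 1) (fun a h1 h2 => hst a (Nat.zero_le a) h2)
              (fun a h1 h2 => hnn a (Nat.zero_le a) h2) hws hdn hnw4
          have hm1 := hint m (by omega) (by omega)
          have hstepm := hst m (Nat.zero_le m) (by omega)
          have hclass : π (m + 1) = π s ∨ π (m + 1) = π s - e := by
            by_cases hc : π s - e < π (m + 1)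
            · left
              exact wall_eq_of_abs_lt hws hwn hc (by omega)
            · right
              omega
          rcases hclass with hret | hesc
          · -- negative arc closes
            have hstep1 : degStep e (π s) (π (s + 1)) = 1 := degStep_wall_src hws (by omega)
            have hstep2 : degStep e (π m) (π (m + 1)) = 0 := degStep_of_lt (by omega)
            have harc : IsNegArc e π 0 (m + 1) s (m + 1) :=
              ⟨Nat.zero_le s, by omega, le_refl _, hws, hret, fun c h1 h2 => hint c h1 h2⟩
            have hnegEq : negArcs e π 0 (m + 1) = insert (s, m + 1) (negArcs e π 0 s) := by
              ext ⟨r, s'⟩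
              simp only [negArcs, Set.mem_setOf_eq, Set.mem_insert_iff, Prod.mk.injEq]
              constructor
              · intro h
                rcases split_negArc he (by omega) hws hnw4 h with ⟨h1, h2⟩ | h'
                · left; exact ⟨h1, h2⟩
                · right; exact h'
              · rintro (⟨rfl, rfl⟩ | h')
                · exact harc
                · exact widen_neg (by omega) h'
            have hposEq : posArcs e π 0 (m + 1) = posArcs e π 0 s := by
              ext ⟨r, s'⟩
              simp only [posArcs, Set.mem_setOf_eq]
              constructor
              · intro h
                rcases split_posArc he (by omega) hws hnw4 h with ⟨h1, h2⟩ | h'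
                · exfalso
                  obtain ⟨-, -, -, -, -, h5⟩ := h
                  subst h1; subst h2
                  have := h5 (s + 1) (by omega) (by omega)
                  omega
                · exact h'
              · exact widen_pos (by omega)
            have hins : (negArcs e π 0 (m + 1)).ncard = (negArcs e π 0 s).ncard + 1 := by
              rw [hnegEq, Set.ncard_insert_of_notMem hnotmemN (negArcs_finite e π 0 s)]
            rw [hsplit, htail, hstep1, hstep2, hIH, hrE0, hposEq, hins]
            push_cast
            ring
          · -- escaped to the next wall down
            have hstep1 : degStep e (π s) (π (s + 1)) = 1 := degStep_wall_src hws (by omega)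
            have hstep2 : degStep e (π m) (π (m + 1)) = -1 :=
              degStep_onto (hnw4 m (by omega) (by omega)) hwn (by omega)
            have hposEq : posArcs e π 0 (m + 1) = posArcs e π 0 s := by
              ext ⟨r, s'⟩
              simp only [posArcs, Set.mem_setOf_eq]
              constructor
              · intro h
                rcases split_posArc he (by omega) hws hnw4 h with ⟨h1, h2⟩ | h'
                · exfalso
                  obtain ⟨-, -, -, -, h4, -⟩ := h
                  subst h1; subst h2
                  omega
                · exact h'
              · exact widen_pos (by omega)
            have hnegEq : negArcs e π 0 (m + 1) = negArcs e π 0 s := by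
              ext ⟨r, s'⟩
              simp only [negArcs, Set.mem_setOf_eq]
              constructor
              · intro h
                rcases split_negArc he (by omega) hws hnw4 h with ⟨h1, h2⟩ | h'
                · exfalso
                  obtain ⟨-, -, -, -, h4, -⟩ := h
                  subst h1; subst h2
                  omega
                · exact h'
              · exact widen_neg (by omega)
            rw [hsplit, htail, hstep1, hstep2, hIH, hrE0, hposEq, hnegEq]
            ring

theorem stmt4 (e : ℤ) (he : 2 ≤ e) (n : ℕ) (π : ℕ → ℤ)
    (h0 : π 0 = 0) (hpath : IsPathOn π 0 n) :
    pathDeg e π 0 n =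
      ((negArcs e π 0 n).ncard : ℤ) - ((posArcs e π 0 n).ncard : ℤ) + rE e n π :=
  main_lemma e he n π h0 hpath
end
end

section
/- Fix $e\ge2$ and $n\ge0$. Define the regularisation map $\operatorname{reg}_e:\mathsf P^+_n\to\mathsf P^+_n$: if $\pi$ never meets $H=\{me-1:m>0\}$, set $\operatorname{reg}_e(\pi)=\pi$; otherwise let $a$ be maximal with $\pi(a)\in H$, say $\pi(a)=me-1$; if $\pi(n)\ge me-1$ set $\operatorname{reg}_e(\pi)=\pi$, else set $\operatorname{reg}_e(\pi)$ to agree with $\pi$ on $[0,a]$ and equal $2(me-1)-\pi(b)$ for $a<b\le n$. Let $r_e(\pi)=0$ if $\operatorname{reg}_e(\pi)=\pi$ and $1$ otherwise. Then $\deg_e(\operatorname{reg}_e(\pi))=\deg_e(\pi)-r_e(\pi)$ for all $\pi\in\mathsf P^+_n$. -/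
open scoped Classical
noncomputable section

lemma not_wall_between (e w x : ℤ) (he : 0 < e) (hw : (w + 1) % e = 0)
    (hne : x ≠ w) (h1 : w - e < x) (h2 : x < w + e) : ¬ isWall e x := by
  intro hx
  have hdw : e ∣ w + 1 := Int.dvd_of_emod_eq_zero hw
  have hdx : e ∣ x + 1 := Int.dvd_of_emod_eq_zero hx.2
  have hd : e ∣ x - w := by
    have := dvd_sub hdx hdw
    simpa using this
  have habs : |x - w| < e := abs_lt.mpr ⟨by linarith, by linarith⟩
  have := Int.eq_zero_of_abs_lt_dvd hd habs
  apply hne; linarith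

lemma degStep_zero (e u v : ℤ) (hu : ¬ isWall e u) (hv : ¬ isWall e v) :
    degStep e u v = 0 := by
  simp [degStep, hu, hv]

theorem stmt5 (e : ℤ) (he : 2 ≤ e) (n : ℕ) (π : ℕ → ℤ)
    (h0 : π 0 = 0) (hpath : IsPathOn π 0 n) :
    pathDeg e (regPath e n π) 0 n =
      pathDeg e π 0 n - (if regPath e n π = π then 0 else 1) := by
  by_cases hne : (wallTimes e n π).Nonempty
  · set a := (wallTimes e n π).max' hne with ha_def
    have hamem : a ∈ wallTimes e n π := Finset.max'_mem _ hne
    have han : a ≤ n := by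
      have := (Finset.mem_filter.mp hamem).1
      exact Nat.lt_succ_iff.mp (Finset.mem_range.mp this)
    have hwall : isWall e (π a) := (Finset.mem_filter.mp hamem).2
    have hmax : ∀ b, b ≤ n → isWall e (π b) → b ≤ a := by
      intro b hb hw
      exact Finset.le_max' _ b
        (Finset.mem_filter.mpr ⟨Finset.mem_range.mpr (Nat.lt_succ_of_le hb), hw⟩)
    by_cases hlt : π n < π a
    · -- reflection case
      set w := π a with hw_def
      have han' : a < n := by
        rcases lt_or_eq_of_le han with h | h
        · exact h
        · exfalso; rw [hw_def] at hlt; rw [h] at hlt; exact lt_irrefl _ hlt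
      have hreg : regPath e n π = (fun b => if b ≤ a then π b else 2 * w - π b) := by
        rw [regPath, dif_pos hne]
        simp only [← ha_def, ← hw_def, if_pos hlt]
      -- upper bound after a
      have hupaux : ∀ k b, n = b + k → a < b → π b < w := by
        intro k
        induction k with
        | zero =>
          intro b hb _
          have : b = n := by omega
          rw [this]; exact hlt
        | succ k ih =>
          intro b hb hab
          have h1 : π (b + 1) < w := ih (b + 1) (by omega) (by omega)
          have hstep := hpath.2 b (Nat.zero_le _) (by omega)
          have hble : π b ≤ w := by rcases hstep with h | h <;> omega
          rcases lt_or_eq_of_le hble with h | h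
          · exact h
          · exfalso
            have := hmax b (by omega) (by rw [h]; exact hwall)
            omega
      have hup : ∀ b, a < b → b ≤ n → π b < w := fun b h1 h2 =>
        hupaux (n - b) b (by omega) h1
      -- lower bound after a
      have hlo : ∀ b, a ≤ b → b ≤ n → w - e < π b := by
        intro b
        induction b with
        | zero =>
          intro hab _
          have ha0 : a = 0 := Nat.le_zero.mp hab
          exfalso
          have hthis : (π a + 1) % e = 0 := by rw [← hw_def]; exact hwall.2
          rw [ha0, h0] at hthis
          have hd : e ∣ (1 : ℤ) := Int.dvd_of_emod_eq_zero (by simpa using hthis)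
          have := Int.le_of_dvd one_pos hd
          omega
        | succ b ih =>
          intro hab hbn
          rcases Nat.lt_or_ge b a with h | h
          · -- a = b + 1
            have : a = b + 1 := by omega
            rw [← this]; linarith
          · have hb1 : w - e < π b := ih h (by omega)
            have hstep := hpath.2 b (Nat.zero_le _) (by omega)
            have hge : w - e ≤ π (b + 1) := by rcases hstep with h' | h' <;> omega
            rcases lt_or_eq_of_le hge with h' | h'
            · exact h'
            · exfalso
              have hnn : 0 ≤ π (b + 1) := hpath.1 (b + 1) (Nat.zero_le _) hbn
              have hwb : isWall e (π (b + 1)) := by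
                constructor
                · omega
                · rw [← h']
                  have heq : w - e + 1 = (w + 1) - e := by ring
                  rw [heq, Int.sub_emod, hwall.2, Int.emod_self]
                  simp
              have := hmax (b + 1) hbn hwb
              omega
      have hstepa : π (a + 1) = w - 1 := by
        have hstep := hpath.2 a (Nat.zero_le _) han'
        have := hup (a + 1) (by omega) (by omega)
        rcases hstep with h | h <;> omega
      -- regPath ≠ π
      have hσne : regPath e n π ≠ π := by
        rw [hreg]
        intro h
        have := congrFun h n
        rw [if_neg (by omega : ¬ n ≤ a)] at this
        omega
      rw [if_neg hσne, hreg]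
      set σ : ℕ → ℤ := fun b => if b ≤ a then π b else 2 * w - π b with hσ_def
      -- non-wall facts on the tail
      have hnwπ : ∀ b, a < b → b ≤ n → ¬ isWall e (π b) := by
        intro b h1 h2
        exact not_wall_between e w (π b) (by omega) hwall.2
          (by have := hup b h1 h2; omega) (hlo b (le_of_lt h1) h2)
          (by have := hup b h1 h2; omega)
      have hnwσ : ∀ b, a < b → b ≤ n → ¬ isWall e (σ b) := by
        intro b h1 h2
        have hσb : σ b = 2 * w - π b := by
          simp only [hσ_def]; rw [if_neg (by omega)]
        rw [hσb]
        exact not_wall_between e w _ (by omega) hwall.2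
          (by have := hup b h1 h2; omega)
          (by have := hup b h1 h2; omega)
          (by have := hlo b (le_of_lt h1) h2; omega)
      -- tails are zero
      have htailπ : pathDeg e π (a + 1) n = 0 := by
        apply Finset.sum_eq_zero
        intro b hb
        rw [Finset.mem_Ico] at hb
        exact degStep_zero e _ _ (hnwπ b (by omega) (by omega))
          (hnwπ (b + 1) (by omega) (by omega))
      have htailσ : pathDeg e σ (a + 1) n = 0 := by
        apply Finset.sum_eq_zero
        intro b hb
        rw [Finset.mem_Ico] at hb
        exact degStep_zero e _ _ (hnwσ b (by omega) (by omega))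
          (hnwσ (b + 1) (by omega) (by omega))
      -- heads agree
      have hhead : pathDeg e σ 0 a = pathDeg e π 0 a := by
        apply Finset.sum_congr rfl
        intro b hb
        rw [Finset.mem_Ico] at hb
        have h1 : σ b = π b := by simp only [hσ_def]; rw [if_pos (by omega)]
        have h2 : σ (b + 1) = π (b + 1) := by
          simp only [hσ_def]; rw [if_pos (by omega)]
        rw [h1, h2]
      -- step at a
      have hσa : σ a = w := by simp only [hσ_def]; rw [if_pos le_rfl]
      have hσa1 : σ (a + 1) = w + 1 := by
        simp only [hσ_def]; rw [if_neg (by omega), hstepa]; ring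
      have hstepσ : degStep e (σ a) (σ (a + 1)) = 0 := by
        rw [hσa, hσa1, degStep, if_neg, if_neg]
        · rintro ⟨-, h⟩; omega
        · rintro ⟨-, h⟩; omega
      have hstepπ : degStep e (π a) (π (a + 1)) = 1 := by
        rw [hstepa, degStep, if_pos ⟨hwall, by omega⟩]
      -- assemble
      have hsplit : ∀ ρ : ℕ → ℤ,
          pathDeg e ρ 0 n = pathDeg e ρ 0 a + degStep e (ρ a) (ρ (a + 1)) +
            pathDeg e ρ (a + 1) n := by
        intro ρ
        have h1 := Finset.sum_Ico_consecutive
          (fun b => degStep e (ρ b) (ρ (b + 1))) (Nat.zero_le a) (le_of_lt han')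
        have h2 := Finset.sum_eq_sum_Ico_succ_bot han'
          (fun b => degStep e (ρ b) (ρ (b + 1)))
        simp only [pathDeg]
        rw [← h1, h2]; ring
      rw [hsplit σ, hsplit π, hhead, htailπ, htailσ, hstepσ, hstepπ]
      ring
    · have hreg : regPath e n π = π := by
        rw [regPath, dif_pos hne]
        simp only [← ha_def, if_neg hlt]
      rw [hreg]; simp
  · have hreg : regPath e n π = π := by rw [regPath, dif_neg hne]
    rw [hreg]; simp
end
end

section
/- Fix $e\ge2$, $k\ge2$. Let $\Phi^+=\{\varepsilon_r-\varepsilon_t:1\le r<t\le k\}$ and $\rho=\sum_{i=1}^{k-1}(k-i)\varepsilon_i$ in the $\mathfrak{sl}_k$ weight space. Let $\mathtt t$ be a column tableau of size $n$ with at most $k$ columns, with associated path $\pi_{\mathtt t}$, and suppose $(\pi_{\mathtt t}(a)+\rho,\alpha)=me$ for some $\alpha\in\Phi^+$, $m\in\mathbb Z$ and some $a\in[0,n]$. Let $\mathtt s$ be the column tableau whose path agrees with $\pi_{\mathtt t}$ on $[0,a]$ and equals the reflection $s_{\alpha,m}\cdot\pi_{\mathtt t}(b)=\pi_{\mathtt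 t}(b)-((\pi_{\mathtt t}(b)+\rho,\alpha)-me)\alpha$ for $a<b\le n$. Then the residue sequences of $\mathtt s$ and $\mathtt t$ coincide: $\mathbf i^{\mathtt s}=\mathbf i^{\mathtt t}$. -/
open scoped Classical
noncomputable section

/-- A column tableau of size `n` with entries in the first `k` columns
(0-based). -/
def IsColTab (k n : ℕ) (t : Fin n → ℕ × ℕ) : Prop :=
  Function.Injective t ∧
  (∀ r : Fin n, ∀ a b : ℕ, t r = (a + 1, b) → ∃ r' : Fin n, r' < r ∧ t r' = (a, b)) ∧
  (∀ r : Fin n, (t r).2 < k)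

/-- Number of entries among the first `a` entries lying in column `j`. -/
def cntCol (n : ℕ) (t : Fin n → ℕ × ℕ) (a j : ℕ) : ℕ :=
  (Finset.univ.filter fun r : Fin n => (r : ℕ) < a ∧ (t r).2 = j).card

/-- The residue of a node (0-based): column minus row, mod `e`. -/
def resNode (e : ℕ) (v : ℕ × ℕ) : ZMod e := (v.2 : ZMod e) - (v.1 : ZMod e)

lemma colTab_exists_above {k n : ℕ} {t : Fin n → ℕ × ℕ} (h : IsColTab k n t)
    (b : Fin n) : ∀ d, d ≤ (t b).1 → ∃ r' : Fin n, r' ≤ b ∧ t r' = ((t b).1 - d, (t b).2) := by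
  intro d
  induction d with
  | zero => intro _; exact ⟨b, le_refl _, by simp⟩
  | succ d ih =>
    intro hd
    obtain ⟨r', hr'b, hr'⟩ := ih (Nat.le_of_succ_le hd)
    have heq : (t b).1 - d = ((t b).1 - (d+1)) + 1 := by omega
    obtain ⟨r'', hlt, hr''⟩ := h.2.1 r' ((t b).1 - (d+1)) (t b).2 (by rw [hr', heq])
    exact ⟨r'', le_of_lt (lt_of_lt_of_le hlt hr'b), hr''⟩

lemma colTab_lt_of_row_lt {k n : ℕ} {t : Fin n → ℕ × ℕ} (h : IsColTab k n t) {r1 r2 : Fin n}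
    (hc : (t r1).2 = (t r2).2) (hr : (t r1).1 < (t r2).1) : r1 < r2 := by
  obtain ⟨r', hle, hr'⟩ := colTab_exists_above h r2 ((t r2).1 - (t r1).1) (by omega)
  have h2 : (t r2).1 - ((t r2).1 - (t r1).1) = (t r1).1 := by omega
  rw [h2, ← hc] at hr'
  have : r' = r1 := h.1 (by rw [hr'])
  subst this
  exact lt_of_le_of_ne hle (by rintro rfl; omega)

lemma colTab_row_eq {k n : ℕ} {t : Fin n → ℕ × ℕ} (h : IsColTab k n t) (b : Fin n) :
    (t b).1 = cntCol n t b (t b).2 := by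
  unfold cntCol
  rw [← Finset.card_range (t b).1]
  symm
  apply Finset.card_bij (fun r _ => (t r).1)
  · rintro r hr
    simp only [Finset.mem_filter, Finset.mem_univ, true_and] at hr
    simp only [Finset.mem_range]
    rcases lt_trichotomy (t r).1 (t b).1 with h1 | h1 | h1
    · exact h1
    · exfalso
      have : r = b := h.1 (by rw [Prod.ext_iff]; exact ⟨h1, hr.2⟩)
      omega
    · exfalso
      have hlt := colTab_lt_of_row_lt h hr.2.symm h1
      have : (b : ℕ) < (r : ℕ) := hlt
      omega
  · rintro r1 h1 r2 h2 hrow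
    simp only [Finset.mem_filter, Finset.mem_univ, true_and] at h1 h2
    exact h.1 (by rw [Prod.ext_iff]; exact ⟨hrow, h1.2.trans h2.2.symm⟩)
  · rintro a' ha'
    simp only [Finset.mem_range] at ha'
    obtain ⟨r', hle, hr'⟩ := colTab_exists_above h b ((t b).1 - a') (by omega)
    have h2 : (t b).1 - ((t b).1 - a') = a' := by omega
    rw [h2] at hr'
    have hne : r' ≠ b := by rintro rfl; rw [hr'] at ha'; simp at ha'
    refine ⟨r', ?_, by rw [hr']⟩
    simp only [Finset.mem_filter, Finset.mem_univ, true_and]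
    have hlt : r' < b := lt_of_le_of_ne hle hne
    exact ⟨hlt, by rw [hr']⟩

lemma cntCol_succ (n : ℕ) (t : Fin n → ℕ × ℕ) (b : Fin n) (j : ℕ) :
    cntCol n t ((b:ℕ)+1) j = cntCol n t (b:ℕ) j + if (t b).2 = j then 1 else 0 := by
  classical
  unfold cntCol
  have hset : (Finset.univ.filter fun r : Fin n => (r:ℕ) < (b:ℕ)+1 ∧ (t r).2 = j)
      = (Finset.univ.filter fun r : Fin n => (r:ℕ) < (b:ℕ) ∧ (t r).2 = j) ∪
        (Finset.univ.filter fun r : Fin n => r = b ∧ (t r).2 = j) := by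
    ext x
    simp only [Finset.mem_filter, Finset.mem_union, Finset.mem_univ, true_and]
    constructor
    · rintro ⟨h1, h2⟩
      rcases Nat.lt_succ_iff_lt_or_eq.mp h1 with h | h
      · exact Or.inl ⟨h, h2⟩
      · exact Or.inr ⟨Fin.ext h, h2⟩
    · rintro (⟨h1, h2⟩ | ⟨h1, h2⟩)
      · exact ⟨Nat.lt_succ_of_lt h1, h2⟩
      · exact ⟨by rw [h1]; omega, h2⟩
  rw [hset, Finset.card_union_of_disjoint]
  · congr 1
    by_cases h : (t b).2 = j
    · rw [if_pos h]
      have : (Finset.univ.filter fun r : Fin n => r = b ∧ (t r).2 = j) = {b} := by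
        ext x
        simp only [Finset.mem_filter, Finset.mem_univ, true_and, Finset.mem_singleton]
        constructor
        · rintro ⟨rfl, _⟩; rfl
        · rintro rfl; exact ⟨rfl, h⟩
      rw [this, Finset.card_singleton]
    · rw [if_neg h]
      have : (Finset.univ.filter fun r : Fin n => r = b ∧ (t r).2 = j) = ∅ := by
        ext x
        simp only [Finset.mem_filter, Finset.mem_univ, true_and, Finset.notMem_empty,
          iff_false, not_and]
        rintro rfl; exact h
      rw [this, Finset.card_empty]
  · rw [Finset.disjoint_left]
    intro x hx1 hx2
    simp only [Finset.mem_filter, Finset.mem_univ, true_and] at hx1 hx2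
    rw [hx2.1] at hx1
    omega

lemma cntCol_succ_self (n : ℕ) (t : Fin n → ℕ × ℕ) (b : Fin n) :
    cntCol n t ((b:ℕ)+1) (t b).2 = cntCol n t (b:ℕ) (t b).2 + 1 := by
  rw [cntCol_succ, if_pos rfl]

lemma cntCol_succ_ne (n : ℕ) (t : Fin n → ℕ × ℕ) (b : Fin n) (j : ℕ) (hj : (t b).2 ≠ j) :
    cntCol n t ((b:ℕ)+1) j = cntCol n t (b:ℕ) j := by
  rw [cntCol_succ, if_neg hj]; omega

/-- Reflecting the tail of the path of a column tableau in a wall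
`H_{α,m}` (for `α = ε_r - ε_{t'}`) does not change the residue sequence.
The tableau `ss` whose path is the tail-reflection of that of `tt` is
characterised by the displayed effect on column counts. -/
theorem stmt6 (e k n : ℕ) (he : 2 ≤ e) (hk : 2 ≤ k)
    (tt ss : Fin n → ℕ × ℕ) (htt : IsColTab k n tt) (hss : IsColTab k n ss)
    (r t' : ℕ) (hrt : r < t') (ht'k : t' < k) (m : ℤ) (a : ℕ) (han : a ≤ n)
    (hwall : (cntCol n tt a r : ℤ) - (cntCol n tt a t' : ℤ) + ((t' : ℤ) - (r : ℤ))
        = m * e)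
    (hlo : ∀ b ≤ a, ∀ j < k, cntCol n ss b j = cntCol n tt b j)
    (hhi : ∀ b, a < b → b ≤ n →
      (∀ j < k, j ≠ r → j ≠ t' → cntCol n ss b j = cntCol n tt b j) ∧
      (cntCol n ss b r : ℤ)
          = (cntCol n tt b t' : ℤ) + ((r : ℤ) - (t' : ℤ)) + m * e ∧
      (cntCol n ss b t' : ℤ)
          = (cntCol n tt b r : ℤ) + ((t' : ℤ) - (r : ℤ)) - m * e) :
    ∀ b : Fin n, resNode e (ss b) = resNode e (tt b) := by
  obtain ⟨M, hM⟩ : ∃ M : ℤ, M = m * e := ⟨_, rfl⟩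
  intro b
  set j := (tt b).2 with hj
  set j' := (ss b).2 with hj'
  have hjk : j < k := htt.2.2 b
  have hj'k : j' < k := hss.2.2 b
  have hrowt : (tt b).1 = cntCol n tt b j := colTab_row_eq htt b
  have hrows : (ss b).1 = cntCol n ss b j' := colTab_row_eq hss b
  have hb1n : (b:ℕ)+1 ≤ n := b.2
  have jt1 : cntCol n tt ((b:ℕ)+1) j = cntCol n tt (b:ℕ) j + 1 := cntCol_succ_self n tt b
  have jt2 : ∀ j2, j ≠ j2 → cntCol n tt ((b:ℕ)+1) j2 = cntCol n tt (b:ℕ) j2 :=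
    fun j2 h2 => cntCol_succ_ne n tt b j2 h2
  have js1 : cntCol n ss ((b:ℕ)+1) j' = cntCol n ss (b:ℕ) j' + 1 := cntCol_succ_self n ss b
  have js2 : ∀ j2, j' ≠ j2 → cntCol n ss ((b:ℕ)+1) j2 = cntCol n ss (b:ℕ) j2 :=
    fun j2 h2 => cntCol_succ_ne n ss b j2 h2
  suffices hkey : ∃ z : ℤ, (j' : ℤ) - cntCol n ss (b:ℕ) j'
      = (j : ℤ) - cntCol n tt (b:ℕ) j + z * e by
    obtain ⟨z, hz⟩ := hkey
    unfold resNode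
    rw [← hj, ← hj', hrowt, hrows]
    have hc := congrArg (fun x : ℤ => (x : ZMod e)) hz
    push_cast at hc
    rw [ZMod.natCast_self, mul_zero, add_zero] at hc
    exact hc
  rcases lt_or_ge (b:ℕ) a with hba | hba
  · -- low regime: counts agree at b and b+1
    have e1 := hlo (b:ℕ) (by omega) j' hj'k
    have e2 := hlo ((b:ℕ)+1) (by omega) j' hj'k
    have hjj' : j = j' := by
      by_contra hne
      have h1 := jt2 j' hne
      omega
    refine ⟨0, ?_⟩
    rw [hjj']
    rw [e1]
    ring
  · -- high regime and boundary
    rw [← hM] at hwall hhi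
    have hrk : r < k := lt_trans hrt ht'k
    have Rb1 := hhi ((b:ℕ)+1) (by omega) hb1n
    have Rb : (∀ j2 < k, j2 ≠ r → j2 ≠ t' → cntCol n ss (b:ℕ) j2 = cntCol n tt (b:ℕ) j2) ∧
        (cntCol n ss (b:ℕ) r : ℤ) = (cntCol n tt (b:ℕ) t' : ℤ) + ((r:ℤ) - (t':ℤ)) + M ∧
        (cntCol n ss (b:ℕ) t' : ℤ) = (cntCol n tt (b:ℕ) r : ℤ) + ((t':ℤ) - (r:ℤ)) - M := by
      rcases eq_or_lt_of_le hba with heq | hlt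
      · have er := hlo (b:ℕ) (le_of_eq heq.symm) r hrk
        have et := hlo (b:ℕ) (le_of_eq heq.symm) t' ht'k
        rw [heq] at hwall
        refine ⟨fun j2 h2 _ _ => hlo (b:ℕ) (le_of_eq heq.symm) j2 h2, by omega, by omega⟩
      · exact hhi (b:ℕ) hlt (by omega)
    by_cases hjr : j = r
    · -- tt jumps at r, so ss jumps at t'
      have hjt'ne : j ≠ t' := by omega
      have ht2 := jt2 t' hjt'ne
      rw [hjr] at jt1
      have hj't' : j' = t' := by
        by_contra hne
        have := js2 t' hne
        have h1 := Rb.2.2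
        have h2 := Rb1.2.2
        omega
      refine ⟨m, ?_⟩
      rw [← hM, hjr, hj't']
      have h1 := Rb.2.2
      omega
    · by_cases hjt : j = t'
      · -- tt jumps at t', so ss jumps at r
        have ht2 := jt2 r (by omega)
        rw [hjt] at jt1
        have hj'r : j' = r := by
          by_contra hne
          have := js2 r hne
          have h1 := Rb.2.1
          have h2 := Rb1.2.1
          omega
        refine ⟨-m, ?_⟩
        have hMe : -m * (e:ℤ) = -M := by rw [hM]; ring
        rw [hjt, hj'r, hMe]
        have h1 := Rb.2.1
        omega
      · -- tt jumps elsewhere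
        have hj'j : j' = j := by
          by_contra hne
          by_cases hj'r : j' = r
          · rw [hj'r] at js1
            have h1 := Rb.2.1
            have h2 := Rb1.2.1
            have ht2 := jt2 t' hjt
            omega
          · by_cases hj't : j' = t'
            · rw [hj't] at js1
              have h1 := Rb.2.2
              have h2 := Rb1.2.2
              have ht2 := jt2 r hjr
              omega
            · have e1 := Rb.1 j' hj'k hj'r hj't
              have e2 := Rb1.1 j' hj'k hj'r hj't
              have ht2 := jt2 j' (fun h => hne h.symm)
              omega
        refine ⟨0, ?_⟩
        rw [hj'j]
        have := Rb.1 j hjk hjr hjt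
        rw [this]
        ring
end
end

section
/- Let $\lambda$ be a partition of $n$ with at most two columns (all parts at most 2). Suppose $\mathtt t,\mathtt s$ are standard $\lambda$-tableaux with $\mathtt s\trianglelefteq\mathtt t$ in the dominance order on tableaux, and let $w\in\mathfrak S_n$ be the permutation with $\mathtt s=w\mathtt t$. Then $\ell(d(\mathtt s))=\ell(d(\mathtt t))+\ell(w)$, where $d(\mathtt t)$ is the unique permutation with $d(\mathtt t)\mathtt t^\lambda=\mathtt t$ and $\ell$ denotes Coxeter length in $\mathfrak S_n$. -/
/-! Since `s = w t`, we have `d(s) = w d(t)`, and lengths add as soon as `w` keeps every inversion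
of `d(t)` inverted. As `t^λ` is read row by row, an inversion of `d(t)` is a pair of cells
`(r₁, 1)`, `(r₂, 0)` with `r₁ < r₂` such that `t(r₂, 0) < t(r₁, 1)`. If `s(r₁, 1) < s(r₂, 0)`,
count the first `m = s(r₁, 1) + 1` entries. In `s` they fill rows `≤ r₁`, and the others lie in
column `0` in rows strictly between `r₁` and `r₂`, so `m ≤ 2(r₁ + 1) + (r₂ - r₁ - 1)`. Dominance
forces them to fill rows `≤ r₁` of `t` too, so they contain `t(r₁, 1)`, hence `t(r₂, 0)` and the
column `0` down to row `r₂`: `m ≥ 2(r₁ + 1) + (r₂ - r₁)`. -/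

open scoped Classical
noncomputable section

/-- A standard tableau of size `n` (0-based nodes): injective, image is a
Young diagram (downward closed), entries increase along rows and columns. -/
def IsStdTab (n : ℕ) (t : Fin n → ℕ × ℕ) : Prop :=
  Function.Injective t ∧
  (∀ r : Fin n, ∀ a b : ℕ, a ≤ (t r).1 → b ≤ (t r).2 → ∃ r' : Fin n, t r' = (a, b)) ∧
  (∀ r s : Fin n, (t r).1 ≤ (t s).1 → (t r).2 ≤ (t s).2 → r ≤ s)

/-- The type-`A₁` path attached to a two-column tableau. -/
def pth (n : ℕ) (t : Fin n → ℕ × ℕ) (a : ℕ) : ℤ :=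
  (cntCol n t a 0 : ℤ) - (cntCol n t a 1 : ℤ)

/-- Membership in the Young diagram of `(2^x, 1^y)` (0-based). -/
def memShape2 (x y : ℕ) (v : ℕ × ℕ) : Prop :=
  (v.1 < x ∧ v.2 < 2) ∨ (x ≤ v.1 ∧ v.1 < x + y ∧ v.2 = 0)

/-- The row-reading standard tableau of shape `(2^x, 1^y)` (0-based). -/
def rowTab (x : ℕ) (n : ℕ) (r : Fin n) : ℕ × ℕ :=
  if (r : ℕ) < 2 * x then ((r : ℕ) / 2, (r : ℕ) % 2) else ((r : ℕ) - x, 0)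

/-- Partial row sums of the shape of the restriction of `t` to its first `m`
entries: the number of entries among the first `m` lying in rows `0,…,r`. -/
def rowCnt (n : ℕ) (t : Fin n → ℕ × ℕ) (m r : ℕ) : ℕ :=
  (Finset.univ.filter fun i : Fin n => (i : ℕ) < m ∧ (t i).1 ≤ r).card

/-- The dominance order on standard tableaux of the same shape. -/
def TabDom (n : ℕ) (s t : Fin n → ℕ × ℕ) : Prop :=
  ∀ m ≤ n, ∀ r, rowCnt n s m r ≤ rowCnt n t m r

/-- The Coxeter length of a permutation of `{0,…,n-1}`: its number of
inversions. -/
def invLen {n : ℕ} (w : Equiv.Perm (Fin n)) : ℕ :=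
  ((Finset.univ ×ˢ Finset.univ : Finset (Fin n × Fin n)).filter
    fun p => p.1 < p.2 ∧ w p.2 < w p.1).card

section StandardTableau

variable {n : ℕ} {t s : Fin n → ℕ × ℕ}

def initialCells (t : Fin n → ℕ × ℕ) (m : ℕ) : Finset (ℕ × ℕ) :=
  (Finset.univ.filter fun k : Fin n => (k : ℕ) < m).image t

lemma mem_initialCells {m : ℕ} {c : ℕ × ℕ} :
    c ∈ initialCells t m ↔ ∃ k : Fin n, (k : ℕ) < m ∧ t k = c := by
  simp [initialCells]

lemma val_lt_of_mem_initialCells (ht : Function.Injective t) {m : ℕ} {k : Fin n}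
    (h : t k ∈ initialCells t m) : (k : ℕ) < m := by
  obtain ⟨k', hk', he⟩ := mem_initialCells.1 h
  exact ht he ▸ hk'

lemma card_initialCells (ht : Function.Injective t) {m : ℕ} (hm : m ≤ n) :
    (initialCells t m).card = m := by
  rw [initialCells, Finset.card_image_of_injective _ ht, Fin.card_filter_val_lt, min_eq_right hm]

lemma rowCnt_eq_card_filter (ht : Function.Injective t) (m r : ℕ) :
    rowCnt n t m r = ((initialCells t m).filter fun c => c.1 ≤ r).card := by
  rw [initialCells, Finset.filter_image, Finset.card_image_of_injective _ ht, Finset.filter_filter]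
  rfl

lemma IsStdTab.le_of_le (ht : IsStdTab n t) {k k' : Fin n} (h : t k ≤ t k') : k ≤ k' :=
  ht.2.2 k k' h.1 h.2

lemma IsStdTab.exists_le_of_le (ht : IsStdTab n t) {k : Fin n} {c : ℕ × ℕ} (hc : c ≤ t k) :
    ∃ k' ≤ k, t k' = c := by
  obtain ⟨k', hk'⟩ := ht.2.1 k c.1 c.2 hc.1 hc.2
  exact ⟨k', ht.le_of_le (hk' ▸ hc), hk'⟩

lemma IsStdTab.mem_initialCells_of_le (ht : IsStdTab n t) {m : ℕ} {k : Fin n}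
    (hk : (k : ℕ) < m) {c : ℕ × ℕ} (hc : c ≤ t k) : c ∈ initialCells t m := by
  obtain ⟨k', hk'k, rfl⟩ := ht.exists_le_of_le hc
  exact mem_initialCells.2 ⟨k', lt_of_le_of_lt (Fin.le_iff_val_le_val.1 hk'k) hk, rfl⟩

end StandardTableau

section TwoColumn

variable {n : ℕ} {t s : Fin n → ℕ × ℕ}

def topRows (r : ℕ) : Finset (ℕ × ℕ) := Finset.range (r + 1) ×ˢ Finset.range 2

lemma card_topRows (r : ℕ) : (topRows r).card = 2 * (r + 1) := by
  simp [topRows, mul_comm]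

lemma topRows_subset_initialCells_of_tabDom (hs : Function.Injective s)
    (ht : Function.Injective t)
    (ht₂ : ∀ k, (t k).2 < 2) (hdom : TabDom n s t) {m r : ℕ} (hm : m ≤ n)
    (hsub : topRows r ⊆ initialCells s m) : topRows r ⊆ initialCells t m := by
  have hfilter : ((initialCells t m).filter fun c => c.1 ≤ r) ⊆ topRows r := by
    intro c hc
    obtain ⟨hc, hcr⟩ := Finset.mem_filter.1 hc
    obtain ⟨k, -, rfl⟩ := mem_initialCells.1 hc
    simp only [topRows, Finset.mem_product, Finset.mem_range]
    exact ⟨by omega, ht₂ k⟩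
  have hcard : (topRows r).card ≤ ((initialCells t m).filter fun c => c.1 ≤ r).card :=
    calc (topRows r).card
        ≤ ((initialCells s m).filter fun c => c.1 ≤ r).card := by
          refine Finset.card_le_card fun c hc => Finset.mem_filter.2 ⟨hsub hc, ?_⟩
          simp only [topRows, Finset.mem_product, Finset.mem_range] at hc
          omega
      _ = rowCnt n s m r := (rowCnt_eq_card_filter hs m r).symm
      _ ≤ rowCnt n t m r := hdom m hm r
      _ = _ := rowCnt_eq_card_filter ht m r
  rw [← Finset.eq_of_subset_of_card_le hfilter hcard]
  exact Finset.filter_subset _ _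

lemma IsStdTab.initialCells_subset_topRows_union (hs : IsStdTab n s) (hs₂ : ∀ k, (s k).2 < 2)
    {r₁ r₂ : ℕ} {a b : Fin n} (hsa : s a = (r₂, 0)) (hsb : s b = (r₁, 1)) (hba : b < a) :
    initialCells s (b + 1) ⊆ topRows r₁ ∪ Finset.Ioo r₁ r₂ ×ˢ {0} := by
  intro c hc
  obtain ⟨k, hk, rfl⟩ := mem_initialCells.1 hc
  have hkb : k ≤ b := Fin.le_iff_val_le_val.2 (Nat.lt_succ_iff.1 hk)
  have hcol := hs₂ k
  by_cases hrow : (s k).1 ≤ r₁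
  · simp [topRows, hrow, hcol]
  have hcol0 : (s k).2 = 0 := by
    by_contra hne
    have : b ≤ k := hs.le_of_le (by rw [hsb]; exact ⟨by omega, by omega⟩)
    rw [le_antisymm hkb this, hsb] at hrow
    exact hrow le_rfl
  have hrow₂ : (s k).1 < r₂ := by
    by_contra hge
    have : a ≤ k := hs.le_of_le (by rw [hsa]; exact ⟨by omega, by omega⟩)
    exact absurd (hba.trans_le (this.trans hkb)) (lt_irrefl b)
  refine Finset.mem_union_right _ (Finset.mem_product.2 ⟨?_, ?_⟩)
  · simpa using ⟨by omega, hrow₂⟩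
  · simpa using hcol0

theorem entry_lt_entry_of_tabDom (hs : IsStdTab n s) (ht : IsStdTab n t)
    (hs₂ : ∀ k, (s k).2 < 2) (ht₂ : ∀ k, (t k).2 < 2) (hdom : TabDom n s t)
    {r₁ r₂ : ℕ} (hr : r₁ < r₂) {a b A B : Fin n}
    (hsa : s a = (r₂, 0)) (hsb : s b = (r₁, 1)) (htA : t A = (r₂, 0)) (htB : t B = (r₁, 1))
    (hAB : A < B) : a < b := by
  by_contra! hba
  replace hba : b < a := lt_of_le_of_ne hba fun h => by simp [h, hsa] at hsb
  set m := (b : ℕ) + 1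
  have hm : m ≤ n := b.isLt
  have hs_top : topRows r₁ ⊆ initialCells s m := fun c hc =>
    hs.mem_initialCells_of_le (Nat.lt_succ_self b) (by
      simp only [topRows, Finset.mem_product, Finset.mem_range] at hc
      rw [hsb]; exact ⟨by omega, by omega⟩)
  have ht_top := topRows_subset_initialCells_of_tabDom hs.1 ht.1 ht₂ hdom hm hs_top
  have hB : (B : ℕ) < m := val_lt_of_mem_initialCells ht.1
    (htB ▸ ht_top (by simp [topRows]))
  have ht_col : Finset.Ioc r₁ r₂ ×ˢ {0} ⊆ initialCells t m := fun c hc =>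
    ht.mem_initialCells_of_le (k := A) (lt_trans hAB hB) (by
      simp only [Finset.mem_product, Finset.mem_Ioc, Finset.mem_singleton] at hc
      rw [htA]; exact ⟨by omega, by omega⟩)
  have hdisj : Disjoint (topRows r₁) (Finset.Ioc r₁ r₂ ×ˢ {0}) := by
    rw [Finset.disjoint_left]
    intro c hc hc'
    simp only [topRows, Finset.mem_product, Finset.mem_range, Finset.mem_Ioc] at hc hc'
    omega
  have hupper := (Finset.card_le_card (hs.initialCells_subset_topRows_union hs₂ hsa hsb hba)).trans
    (Finset.card_union_le _ _)
  have hlower := Finset.card_le_card (Finset.union_subset ht_top ht_col)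
  rw [card_initialCells hs.1 hm, card_topRows] at hupper
  rw [card_initialCells ht.1 hm, Finset.card_union_of_disjoint hdisj, card_topRows] at hlower
  simp only [Finset.card_product, Nat.card_Ioo, Nat.card_Ioc, Finset.card_singleton] at hupper hlower
  omega

end TwoColumn

lemma invLen_trans_eq_add {n : ℕ} (u v : Equiv.Perm (Fin n))
    (h : ∀ i j, i < j → v j < v i → u (v j) < u (v i)) :
    invLen (v.trans u) = invLen u + invLen v := by
  set S : Finset (Fin n × Fin n) := Finset.univ ×ˢ Finset.univ
  have hsplit := Finset.card_filter_add_card_filter_not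
    (s := S.filter fun p => p.1 < p.2 ∧ u (v p.2) < u (v p.1)) (fun p => v p.1 < v p.2)
  simp only [Finset.filter_filter] at hsplit
  have hu : (S.filter fun p => (p.1 < p.2 ∧ u (v p.2) < u (v p.1)) ∧ v p.1 < v p.2).card
      = invLen u := by
    refine Finset.card_nbij' (fun p => (v p.1, v p.2)) (fun p => (v.symm p.1, v.symm p.2))
      ?_ ?_ (fun p _ => by simp) (fun p _ => by simp)
    · rintro ⟨i, j⟩ hp
      simp only [S, Finset.coe_filter, Finset.mem_product, Finset.mem_univ, true_and,
        Set.mem_ofPred_eq] at hp ⊢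
      exact ⟨hp.2, hp.1.2⟩
    · rintro ⟨a, b⟩ hp
      simp only [S, Finset.coe_filter, Finset.mem_product, Finset.mem_univ, true_and,
        Set.mem_ofPred_eq, Equiv.apply_symm_apply] at hp ⊢
      refine ⟨⟨lt_of_not_ge fun hba => ?_, hp.2⟩, hp.1⟩
      have hne : v.symm b ≠ v.symm a := fun he => hp.1.ne (v.symm.injective he).symm
      have := h _ _ (lt_of_le_of_ne hba hne) (by simpa using hp.1)
      simp only [Equiv.apply_symm_apply] at this
      exact lt_asymm this hp.2
  have hv : (S.filter fun p => (p.1 < p.2 ∧ u (v p.2) < u (v p.1)) ∧ ¬ v p.1 < v p.2)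
      = S.filter fun p => p.1 < p.2 ∧ v p.2 < v p.1 := by
    refine Finset.filter_congr fun p _ => ⟨fun hp => ⟨hp.1.1, ?_⟩, fun hp => ⟨⟨hp.1, ?_⟩, ?_⟩⟩
    · exact lt_of_le_of_ne (not_lt.1 hp.2) fun he => hp.1.1.ne (v.injective he).symm
    · exact h _ _ hp.1 hp.2
    · exact not_lt.2 hp.2.le
  rw [hu, hv] at hsplit
  exact hsplit.symm

lemma rowTab_strictMono (x n : ℕ) : StrictMono fun i => toLex (rowTab x n i) := by
  intro i j hij
  rw [Fin.lt_def] at hij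
  simp only [rowTab, Prod.Lex.toLex_lt_toLex]
  split_ifs <;> omega

lemma memShape2.snd_lt_two {x y : ℕ} {c : ℕ × ℕ} (h : memShape2 x y c) : c.2 < 2 := by
  rcases h with h | h <;> omega

lemma IsStdTab.cells_of_entry_lt {n : ℕ} {t : Fin n → ℕ × ℕ} (ht : IsStdTab n t)
    (ht₂ : ∀ k, (t k).2 < 2) {A B : Fin n} (hAB : A < B) (hlex : toLex (t B) < toLex (t A)) :
    (t B).1 < (t A).1 ∧ t B = ((t B).1, 1) ∧ t A = ((t A).1, 0) := by
  have hnle : ¬ t B ≤ t A := fun hle => (ht.le_of_le hle).not_gt hAB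
  rw [Prod.Lex.toLex_lt_toLex] at hlex
  have := ht₂ B
  rw [Prod.le_def] at hnle
  exact ⟨by omega, Prod.ext rfl (by dsimp only; omega), Prod.ext rfl (by dsimp only; omega)⟩

theorem stmt8_general (n x y : ℕ)
    (t s : Fin n → ℕ × ℕ) (ht : IsStdTab n t) (hs : IsStdTab n s)
    (htsh : ∀ i, memShape2 x y (t i)) (hssh : ∀ i, memShape2 x y (s i))
    (hdom : TabDom n s t)
    (dt ds w : Equiv.Perm (Fin n))
    (hdt : ∀ r, t r = rowTab x n (dt⁻¹ r))
    (hds : ∀ r, s r = rowTab x n (ds⁻¹ r))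
    (hw : ∀ r, s r = t (w⁻¹ r)) :
    invLen ds = invLen dt + invLen w := by
  have hds_eq : ds = dt.trans w := by
    refine inv_injective (Equiv.ext fun r => (rowTab_strictMono x n).injective ?_)
    simp only [← hds, hw, hdt]
    rfl
  have ht_row (i : Fin n) : t (dt i) = rowTab x n i := by simp [hdt]
  have hst (i : Fin n) : s (w (dt i)) = t (dt i) := by simp [hw]
  rw [hds_eq, add_comm]
  refine invLen_trans_eq_add w dt fun i j hij hinv => ?_
  obtain ⟨hr, hi, hj⟩ := ht.cells_of_entry_lt (fun k => (htsh k).snd_lt_two) hinv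
    (by simpa only [ht_row] using rowTab_strictMono x n hij)
  exact entry_lt_entry_of_tabDom hs ht (fun k => (hssh k).snd_lt_two)
    (fun k => (htsh k).snd_lt_two) hdom hr ((hst j).trans hj) ((hst i).trans hi) hj hi hinv

theorem stmt8 (n x y : ℕ) (hn : n = 2 * x + y)
    (t s : Fin n → ℕ × ℕ) (ht : IsStdTab n t) (hs : IsStdTab n s)
    (htsh : ∀ i, memShape2 x y (t i)) (hssh : ∀ i, memShape2 x y (s i))
    (hdom : TabDom n s t)
    (dt ds w : Equiv.Perm (Fin n))
    (hdt : ∀ r, t r = rowTab x n (dt⁻¹ r))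
    (hds : ∀ r, s r = rowTab x n (ds⁻¹ r))
    (hw : ∀ r, s r = t (w⁻¹ r)) :
    invLen ds = invLen dt + invLen w :=
  stmt8_general n x y t s ht hs htsh hssh hdom dt ds w hdt hds hw
end
end
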